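/- arXiv:2401.18005 — 8 statements merged into one kernel-verified Lean document; each statement's English description precedes it below -/
import Mathlib

section
/- Let H_A, H_B, H_C, H_D be finite-dimensional complex Hilbert spaces, U : H_A ⊗ H_B → H_C ⊗ H_D a unitary operator, {P_A^i}_{i∈I} a projective decomposition on H_A and {P_D^j}_{j∈J} a projective decomposition on H_D. Set P̃_A^i := P_A^i ⊗ 1_B and P̃_D^j := U* (1_C ⊗ P_D^j) U. Then the following are equivalent: (a) [P̃_A^i, P̃_D^j] = 0 for all i ∈ I and j ∈ J; (b) for every j ∈ J, every function φ : I → ℝ, and every linear operator ρ on H_A ⊗ H_B, Tr((1_C ⊗ P_D^j) · U V_φ ρ V_φ* U*) = Tr((1_C ⊗ P_D^j) · U ρ U*), where V_φ := Σ_{i∈I} e^{i·φ(i)} P_A^i ⊗ 1_B. -/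
open Matrix
open scoped Kronecker

/-- A projective decomposition on a finite-dimensional complex Hilbert space: a finite family of
orthogonal projections, pairwise orthogonal, summing to the identity. -/
def IsProjDecomp {n I : Type} [Fintype n] [DecidableEq n] [Fintype I]
    (P : I → Matrix n n ℂ) : Prop :=
  (∀ i, (P i)ᴴ = P i) ∧ (∀ i, P i * P i = P i) ∧
    (∀ i j, i ≠ j → P i * P j = 0) ∧ (∑ i, P i) = 1


lemma krn_conjTranspose {m n : Type} [Fintype m] [Fintype n]
    (A : Matrix m m ℂ) (B : Matrix n n ℂ) : (A ⊗ₖ B)ᴴ = Aᴴ ⊗ₖ Bᴴ := by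
  ext ⟨i, j⟩ ⟨k, l⟩
  simp [Matrix.conjTranspose_apply, Matrix.kroneckerMap_apply, mul_comm]

lemma krn_sum {m n I : Type} [Fintype m] [Fintype n] [Fintype I]
    (A : I → Matrix m m ℂ) (B : Matrix n n ℂ) :
    (∑ i, A i) ⊗ₖ B = ∑ i, A i ⊗ₖ B := by
  ext ⟨i, j⟩ ⟨k, l⟩
  simp [Matrix.kroneckerMap_apply, Matrix.sum_apply, Finset.sum_mul]

lemma eq_of_trace_mul_eq {n : Type} [Fintype n] [DecidableEq n]
    (N N' : Matrix n n ℂ) (h : ∀ ρ : Matrix n n ℂ, (N * ρ).trace = (N' * ρ).trace) :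
    N = N' := by
  ext i j
  have := h (Matrix.single j i 1)
  simpa [Matrix.trace, Matrix.diag, Matrix.mul_apply, Matrix.single,
    Finset.sum_ite_eq, mul_ite, ite_and, Finset.sum_ite_eq'] using this

lemma main_abstract {n I J : Type} [Fintype n] [DecidableEq n] [Fintype I] [DecidableEq I]
    [Fintype J]
    (Q : I → Matrix n n ℂ) (M : J → Matrix n n ℂ)
    (hQh : ∀ i, (Q i)ᴴ = Q i)
    (hQmul : ∀ i k, Q i * Q k = if i = k then Q i else 0)
    (hQsum : ∑ i, Q i = 1) :
    (∀ i j, Q i * M j = M j * Q i) ↔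
    (∀ (j : J) (φ : I → ℝ) (ρ : Matrix n n ℂ),
      (M j * ((∑ i, Complex.exp (Complex.I * (φ i : ℂ)) • Q i) * ρ *
        (∑ i, Complex.exp (Complex.I * (φ i : ℂ)) • Q i)ᴴ)).trace = (M j * ρ).trace) := by
  have hprod : ∀ a b : I → ℂ,
      (∑ i, a i • Q i) * (∑ k, b k • Q k) = ∑ i, (a i * b i) • Q i := by
    intro a b
    rw [Finset.sum_mul]
    refine Finset.sum_congr rfl fun k _ => ?_
    rw [Finset.mul_sum]
    simp only [smul_mul_assoc, mul_smul_comm, hQmul, smul_ite, smul_zero, smul_smul]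
    simp [Finset.sum_ite_eq, mul_comm]
  have hconj : ∀ φ : I → ℝ, (∑ i, Complex.exp (Complex.I * (φ i : ℂ)) • Q i)ᴴ
      = ∑ i, Complex.exp (-(Complex.I * (φ i : ℂ))) • Q i := by
    intro φ
    rw [Matrix.conjTranspose_sum]
    refine Finset.sum_congr rfl fun k _ => ?_
    rw [Matrix.conjTranspose_smul, hQh]
    congr 1
    rw [Complex.star_def, ← Complex.exp_conj]
    congr 1
    simp [Complex.conj_I, Complex.conj_ofReal, neg_mul]
  have hVV : ∀ φ : I → ℝ,
      (∑ i, Complex.exp (-(Complex.I * (φ i : ℂ))) • Q i) *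
        (∑ i, Complex.exp (Complex.I * (φ i : ℂ)) • Q i) = 1 := by
    intro φ
    rw [hprod]
    simp [← Complex.exp_add, hQsum]
  have hVV' : ∀ φ : I → ℝ,
      (∑ i, Complex.exp (Complex.I * (φ i : ℂ)) • Q i) *
        (∑ i, Complex.exp (-(Complex.I * (φ i : ℂ))) • Q i) = 1 := by
    intro φ
    rw [hprod]
    simp [← Complex.exp_add, hQsum]
  constructor
  · intro h j φ ρ
    set S := ∑ i, Complex.exp (Complex.I * (φ i : ℂ)) • Q i with hS
    have hMS : M j * S = S * M j := by
      rw [hS, Finset.mul_sum, Finset.sum_mul]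
      refine Finset.sum_congr rfl fun k _ => ?_
      rw [mul_smul_comm, ← h k j, smul_mul_assoc]
    have key : M j * (S * ρ * Sᴴ) = S * (M j * ρ) * Sᴴ := by
      simp only [← mul_assoc]
      rw [hMS]
    rw [key, Matrix.trace_mul_cycle, hconj φ, hVV φ, one_mul]
  · intro h i j
    have hcomm : ∀ φ : I → ℝ,
        (∑ i, Complex.exp (Complex.I * (φ i : ℂ)) • Q i) * M j
          = M j * (∑ i, Complex.exp (Complex.I * (φ i : ℂ)) • Q i) := by
      intro φ
      set S := ∑ i, Complex.exp (Complex.I * (φ i : ℂ)) • Q i with hS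
      have h2 : ∀ ρ : Matrix n n ℂ, ((Sᴴ * M j * S) * ρ).trace = (M j * ρ).trace := by
        intro ρ
        have hh := h j φ ρ
        rw [← hS] at hh
        have e : M j * (S * ρ * Sᴴ) = (M j * S * ρ) * Sᴴ := by
          simp only [← mul_assoc]
        rw [e, Matrix.trace_mul_comm] at hh
        have e2 : Sᴴ * (M j * S * ρ) = (Sᴴ * M j * S) * ρ := by
          simp only [← mul_assoc]
        rw [e2] at hh
        exact hh
      have h3 : Sᴴ * M j * S = M j := eq_of_trace_mul_eq _ _ h2
      calc S * M j = S * (Sᴴ * M j * S) := by rw [h3]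
        _ = M j * S := by
            rw [hS, hconj φ]
            simp only [← mul_assoc]
            rw [hVV' φ, one_mul]
    have hφ0 : ∀ k : I, Complex.exp (Complex.I * ((if k = i then Real.pi else 0 : ℝ) : ℂ)) • Q k
        = Q k - (if k = i then (2:ℂ) • Q k else 0) := by
      intro k
      by_cases hk : k = i
      · simp only [if_pos hk]
        rw [mul_comm, Complex.exp_pi_mul_I, neg_smul, one_smul, two_smul]
        abel
      · simp [if_neg hk]
    have hS0 : (∑ k, Complex.exp (Complex.I * (((if k = i then Real.pi else 0 : ℝ)) : ℂ)) • Q k)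
        = 1 - (2:ℂ) • Q i := by
      rw [Finset.sum_congr rfl fun k _ => hφ0 k, Finset.sum_sub_distrib, hQsum,
        Finset.sum_ite_eq' Finset.univ i (fun k => (2:ℂ) • Q k)]
      simp
    have h5 := hcomm (fun k => if k = i then Real.pi else 0)
    rw [hS0] at h5
    have h6 : M j - (2:ℂ) • (Q i * M j) = M j - (2:ℂ) • (M j * Q i) := by
      simpa [sub_mul, mul_sub, smul_mul_assoc, mul_smul_comm] using h5
    have h7 : (2:ℂ) • (Q i * M j) = (2:ℂ) • (M j * Q i) := sub_right_inj.mp h6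
    exact smul_right_injective _ two_ne_zero h7

/-- Theorem 1 of the paper.  For a unitary `U : H_A ⊗ H_B → H_C ⊗ H_D` and
projective decompositions `{P_A^i}` on `H_A`, `{P_D^j}` on `H_D`, all Heisenberg commutators
`[P_A^i ⊗ 1_B, U*(1_C ⊗ P_D^j)U]` vanish iff the outcome statistics on `D` are insensitive
to relative-phase unitaries `V_φ = Σ_i e^{iφ(i)} P_A^i ⊗ 1_B` on `A`. -/
theorem stmt0 {A B C D : Type}
    [Fintype A] [DecidableEq A] [Fintype B] [DecidableEq B]
    [Fintype C] [DecidableEq C] [Fintype D] [DecidableEq D]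
    {I J : Type} [Fintype I] [Fintype J]
    (U : Matrix (C × D) (A × B) ℂ) (hU : U * Uᴴ = 1 ∧ Uᴴ * U = 1)
    (PA : I → Matrix A A ℂ) (PD : J → Matrix D D ℂ)
    (hPA : IsProjDecomp PA) (hPD : IsProjDecomp PD) :
    (∀ (i : I) (j : J),
        (PA i ⊗ₖ (1 : Matrix B B ℂ)) * (Uᴴ * ((1 : Matrix C C ℂ) ⊗ₖ PD j) * U)
          = (Uᴴ * ((1 : Matrix C C ℂ) ⊗ₖ PD j) * U) * (PA i ⊗ₖ (1 : Matrix B B ℂ)))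
    ↔
    (∀ (j : J) (φ : I → ℝ) (ρ : Matrix (A × B) (A × B) ℂ),
        Matrix.trace (((1 : Matrix C C ℂ) ⊗ₖ PD j) *
          (U * ((∑ i, Complex.exp (Complex.I * (φ i : ℂ)) • (PA i ⊗ₖ (1 : Matrix B B ℂ))) *
            ρ * (∑ i, Complex.exp (Complex.I * (φ i : ℂ)) •
              (PA i ⊗ₖ (1 : Matrix B B ℂ)))ᴴ) * Uᴴ))
        = Matrix.trace (((1 : Matrix C C ℂ) ⊗ₖ PD j) * (U * ρ * Uᴴ))) := by
  letI : DecidableEq I := Classical.decEq I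
  obtain ⟨hPAh, hPAidem, hPAorth, hPAsum⟩ := hPA
  have htr : ∀ (j : J) (X : Matrix (A × B) (A × B) ℂ),
      (((1 : Matrix C C ℂ) ⊗ₖ PD j) * (U * X * Uᴴ)).trace
        = ((Uᴴ * ((1 : Matrix C C ℂ) ⊗ₖ PD j) * U) * X).trace := by
    intro j X
    rw [← Matrix.mul_assoc, Matrix.trace_mul_comm, ← Matrix.mul_assoc, ← Matrix.mul_assoc]
  simp only [htr]
  refine main_abstract (fun i => PA i ⊗ₖ (1 : Matrix B B ℂ))
    (fun j => Uᴴ * ((1 : Matrix C C ℂ) ⊗ₖ PD j) * U) ?_ ?_ ?_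
  · intro i
    rw [krn_conjTranspose, hPAh, Matrix.conjTranspose_one]
  · intro i k
    by_cases h : i = k
    · subst h
      rw [← Matrix.mul_kronecker_mul, hPAidem, one_mul, if_pos rfl]
    · rw [← Matrix.mul_kronecker_mul, hPAorth i k h, one_mul, if_neg h, Matrix.zero_kronecker]
  · rw [← krn_sum, hPAsum, Matrix.one_kronecker_one]
end

section
/- Let H_A, H_B, H_C, H_D be finite-dimensional complex Hilbert spaces and U : H_A ⊗ H_B → H_C ⊗ H_D a unitary operator. Then the following are equivalent: (a) there exist linear operators M on H_A and N on H_D with [M ⊗ 1_B, U*(1_C ⊗ N)U] ≠ 0 (i.e., there is a quantum causal influence from A to D through U, in the commutation characterization); (b) there exist projective decompositions {P_A^i} on H_A and {P_D^j} on H_D and indices i, j with [P_A^i ⊗ 1_B, U*(1_C ⊗ P_D^j)U] ≠ 0 (i.e., there is an interference influence from {P_A^i} to {P_D^j}). -/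
/-!
The commutator `[M ⊗ 1_B, U* (1_C ⊗ N) U]` is bilinear in `(M, N)`, so it vanishes identically
as soon as it vanishes on pairs of orthogonal projections, because these span all matrices; and
every orthogonal projection `P` belongs to the projective decomposition `{P, 1 - P}`.
The spanning fact is polarization, `4 u w* = ∑ₖ iᵏ (u + iᵏ w)(u + iᵏ w)*`, together with
`v v* = ‖v‖² · (projection onto v)` for `v ≠ 0`.
-/

open Matrix
open scoped Kronecker

/-- A projective decomposition on a finite-dimensional complex Hilbert space `H_n`, bundled
with its finite index type: a finite family of orthogonal projections, pairwise orthogonal,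
summing to the identity. -/
structure ProjDecompOn (n : Type) [Fintype n] [DecidableEq n] : Type 1 where
  ι : Type
  [fin : Fintype ι]
  P : ι → Matrix n n ℂ
  herm : ∀ i, (P i)ᴴ = P i
  idem : ∀ i, P i * P i = P i
  orth : ∀ i j, i ≠ j → P i * P j = 0
  sum_eq_one : ∑ i, P i = 1

attribute [instance] ProjDecompOn.fin

open Submodule

theorem LinearMap.ext_on₂ {R M N P : Type*} [CommSemiring R] [AddCommMonoid M] [AddCommMonoid N]
    [AddCommMonoid P] [Module R M] [Module R N] [Module R P] {s : Set M} {t : Set N}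
    {f g : M →ₗ[R] N →ₗ[R] P} (hs : span R s = ⊤) (ht : span R t = ⊤)
    (h : ∀ x ∈ s, ∀ y ∈ t, f x y = g x y) : f = g :=
  LinearMap.ext_on hs fun x hx => LinearMap.ext_on ht fun y hy => h x hx y hy

namespace Matrix

section RCLike

open scoped ComplexOrder

variable {𝕜 n : Type*} [RCLike 𝕜] [Fintype n]

theorem isStarProjection_inv_smul_vecMulVec_star {v : n → 𝕜} (hv : v ≠ 0) :
    IsStarProjection ((star v ⬝ᵥ v)⁻¹ • vecMulVec v (star v)) := by
  have hne : star v ⬝ᵥ v ≠ 0 := dotProduct_star_self_eq_zero.not.mpr hv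
  have hreal : star (star v ⬝ᵥ v) = star v ⬝ᵥ v := by rw [← star_dotProduct]
  rw [isStarProjection_iff']
  constructor
  · rw [smul_mul_smul_comm, vecMulVec_mul_vecMulVec, vecMulVec_smul, smul_smul, mul_assoc,
      inv_mul_cancel₀ hne, mul_one]
  · rw [star_smul, star_inv₀, hreal, star_eq_conjTranspose, conjTranspose_vecMulVec, star_star]

theorem vecMulVec_star_self_mem_span_isStarProjection (v : n → 𝕜) :
    vecMulVec v (star v) ∈ span 𝕜 {P : Matrix n n 𝕜 | IsStarProjection P} := by
  rcases eq_or_ne v 0 with rfl | hv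
  · simp
  · have hne : star v ⬝ᵥ v ≠ 0 := dotProduct_star_self_eq_zero.not.mpr hv
    have := smul_mem _ (star v ⬝ᵥ v) (subset_span (isStarProjection_inv_smul_vecMulVec_star hv))
    rwa [smul_smul, mul_inv_cancel₀ hne, one_smul] at this

end RCLike

variable {n : Type*} [Fintype n]

theorem vecMulVec_star_polarization (u w : n → ℂ) :
    (4 : ℂ) • vecMulVec u (star w) =
      vecMulVec (u + w) (star (u + w)) - vecMulVec (u - w) (star (u - w))
        + Complex.I • vecMulVec (u + Complex.I • w) (star (u + Complex.I • w))
        - Complex.I • vecMulVec (u - Complex.I • w) (star (u - Complex.I • w)) := by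
  ext i j
  simp only [vecMulVec_apply, smul_apply, add_apply, sub_apply, Pi.add_apply, Pi.sub_apply,
    Pi.star_apply, Pi.smul_apply, star_add, star_sub, star_smul, smul_eq_mul, RCLike.star_def,
    Complex.conj_I]
  ring_nf
  simp only [Complex.I_sq]
  ring

theorem vecMulVec_star_mem_span_isStarProjection (u w : n → ℂ) :
    vecMulVec u (star w) ∈ span ℂ {P : Matrix n n ℂ | IsStarProjection P} := by
  rw [← inv_smul_smul₀ (by norm_num : (4 : ℂ) ≠ 0) (vecMulVec u (star w)),
    vecMulVec_star_polarization]
  refine smul_mem _ _ (sub_mem (add_mem (sub_mem ?_ ?_) (smul_mem _ _ ?_)) (smul_mem _ _ ?_)) <;>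
    exact vecMulVec_star_self_mem_span_isStarProjection _

theorem span_isStarProjection_eq_top [DecidableEq n] :
    span ℂ {P : Matrix n n ℂ | IsStarProjection P} = ⊤ := by
  refine eq_top_iff'.mpr fun M => ?_
  rw [matrix_eq_sum_single M]
  refine sum_mem fun i _ => sum_mem fun j _ => ?_
  have hstar : (Pi.single j 1 : n → ℂ) = star (Pi.single j 1) := by simp
  rw [← mul_one (M i j), ← smul_eq_mul, ← smul_single, single_eq_single_vecMulVec_single, hstar]
  exact smul_mem _ _ (vecMulVec_star_mem_span_isStarProjection _ _)

end Matrix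

def ProjDecompOn.ofIsStarProjection {n : Type} [Fintype n] [DecidableEq n] {P : Matrix n n ℂ}
    (hP : IsStarProjection P) : ProjDecompOn n where
  ι := Bool
  P b := if b then P else 1 - P
  herm b := by cases b <;> simp [← star_eq_conjTranspose, hP.one_sub.isSelfAdjoint.star_eq,
    hP.isSelfAdjoint.star_eq]
  idem b := by cases b <;> simp [hP.one_sub.isIdempotentElem.eq, hP.isIdempotentElem.eq]
  orth b b' h := by cases b <;> cases b' <;> simp_all [hP.mul_one_sub_self, hP.one_sub_mul_self]
  sum_eq_one := by simp

section HeisenbergCommutator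

variable {A B C D : Type} [Fintype A] [Fintype B] [DecidableEq B] [Fintype C] [DecidableEq C]
  [Fintype D]

def heisenbergCommutator (U : Matrix (C × D) (A × B) ℂ) :
    Matrix A A ℂ →ₗ[ℂ] Matrix D D ℂ →ₗ[ℂ] Matrix (A × B) (A × B) ℂ :=
  LinearMap.mk₂ ℂ
    (fun M N => (M ⊗ₖ (1 : Matrix B B ℂ)) * (Uᴴ * ((1 : Matrix C C ℂ) ⊗ₖ N) * U)
      - (Uᴴ * ((1 : Matrix C C ℂ) ⊗ₖ N) * U) * (M ⊗ₖ (1 : Matrix B B ℂ)))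
    (fun _ _ _ => by simp only [add_kronecker, Matrix.add_mul, Matrix.mul_add]; abel)
    (fun _ _ _ => by simp only [smul_kronecker, Matrix.smul_mul, Matrix.mul_smul, smul_sub])
    (fun _ _ _ => by simp only [kronecker_add, Matrix.add_mul, Matrix.mul_add]; abel)
    (fun _ _ _ => by simp only [kronecker_smul, Matrix.smul_mul, Matrix.mul_smul, smul_sub])

theorem heisenbergCommutator_apply_eq_zero_iff (U : Matrix (C × D) (A × B) ℂ)
    (M : Matrix A A ℂ) (N : Matrix D D ℂ) :
    heisenbergCommutator (B := B) U M N = 0 ↔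
      (M ⊗ₖ (1 : Matrix B B ℂ)) * (Uᴴ * ((1 : Matrix C C ℂ) ⊗ₖ N) * U)
        = (Uᴴ * ((1 : Matrix C C ℂ) ⊗ₖ N) * U) * (M ⊗ₖ (1 : Matrix B B ℂ)) := by
  simp only [heisenbergCommutator, LinearMap.mk₂_apply, sub_eq_zero]

end HeisenbergCommutator

theorem stmt2_general {A B C D : Type}
    [Fintype A] [DecidableEq A] [Fintype B] [DecidableEq B]
    [Fintype C] [DecidableEq C] [Fintype D] [DecidableEq D]
    (U : Matrix (C × D) (A × B) ℂ) :
    (∃ (M : Matrix A A ℂ) (N : Matrix D D ℂ),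
        (M ⊗ₖ (1 : Matrix B B ℂ)) * (Uᴴ * ((1 : Matrix C C ℂ) ⊗ₖ N) * U)
          ≠ (Uᴴ * ((1 : Matrix C C ℂ) ⊗ₖ N) * U) * (M ⊗ₖ (1 : Matrix B B ℂ)))
    ↔
    (∃ (PA : ProjDecompOn A) (PD : ProjDecompOn D) (i : PA.ι) (j : PD.ι),
        (PA.P i ⊗ₖ (1 : Matrix B B ℂ)) * (Uᴴ * ((1 : Matrix C C ℂ) ⊗ₖ PD.P j) * U)
          ≠ (Uᴴ * ((1 : Matrix C C ℂ) ⊗ₖ PD.P j) * U) * (PA.P i ⊗ₖ (1 : Matrix B B ℂ))) := by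
  refine ⟨fun ⟨M, N, hMN⟩ => ?_, fun ⟨PA, PD, i, j, h⟩ => ⟨PA.P i, PD.P j, h⟩⟩
  by_contra! hcomm
  have hzero : heisenbergCommutator (B := B) U = 0 :=
    LinearMap.ext_on₂ span_isStarProjection_eq_top span_isStarProjection_eq_top
      fun P hP Q hQ => (heisenbergCommutator_apply_eq_zero_iff U P Q).mpr <|
        hcomm (.ofIsStarProjection hP) (.ofIsStarProjection hQ) true true
  exact hMN <| (heisenbergCommutator_apply_eq_zero_iff U M N).mp <| by simp [hzero]

/-- equation (7) of the paper.  For a unitary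
`U : H_A ⊗ H_B → H_C ⊗ H_D`, there is a quantum influence from `A` to `D`
(some `M` on `A` and `N` on `D` have nonvanishing Heisenberg commutator) iff there is an
interference influence between some pair of projective decompositions on `A` and on `D`. -/
theorem stmt2 {A B C D : Type}
    [Fintype A] [DecidableEq A] [Fintype B] [DecidableEq B]
    [Fintype C] [DecidableEq C] [Fintype D] [DecidableEq D]
    (U : Matrix (C × D) (A × B) ℂ) (hU : U * Uᴴ = 1 ∧ Uᴴ * U = 1) :
    (∃ (M : Matrix A A ℂ) (N : Matrix D D ℂ),
        (M ⊗ₖ (1 : Matrix B B ℂ)) * (Uᴴ * ((1 : Matrix C C ℂ) ⊗ₖ N) * U)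
          ≠ (Uᴴ * ((1 : Matrix C C ℂ) ⊗ₖ N) * U) * (M ⊗ₖ (1 : Matrix B B ℂ)))
    ↔
    (∃ (PA : ProjDecompOn A) (PD : ProjDecompOn D) (i : PA.ι) (j : PD.ι),
        (PA.P i ⊗ₖ (1 : Matrix B B ℂ)) * (Uᴴ * ((1 : Matrix C C ℂ) ⊗ₖ PD.P j) * U)
          ≠ (Uᴴ * ((1 : Matrix C C ℂ) ⊗ₖ PD.P j) * U) * (PA.P i ⊗ₖ (1 : Matrix B B ℂ))) :=
  stmt2_general U
end

section
/- Let H_G, H_A, H_Ā, H_B, H_B̄, H_C, H_C̄, H_F be finite-dimensional complex Hilbert spaces and let U1 : H_G → H_A ⊗ H_Ā, U2 : H_A ⊗ H_Ā → H_B ⊗ H_B̄, U3 : H_B ⊗ H_B̄ → H_C ⊗ H_C̄, U4 : H_C ⊗ H_C̄ → H_F be unitary operators. Let H_{A'}, H_{B'}, H_{C'} be copies of H_A, H_B, H_C, and let U : H_{A'} ⊗ H_{B'} ⊗ H_{C'} ⊗ H_G → H_A ⊗ H_B ⊗ H_C ⊗ H_F be the 'comb' unitary obtained as follows: apply U1 to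 the H_G factor (producing factors H_A and H_Ā), then apply U2 to H_{A'} ⊗ H_Ā (producing H_B and H_B̄), then apply U3 to H_{B'} ⊗ H_B̄ (producing H_C and H_C̄), then apply U4 to H_{C'} ⊗ H_C̄ (producing H_F), carrying the produced factors H_A, H_B, H_C unchanged to the output; formally U is the composite of U1 ⊗ 1, U2 ⊗ 1, U3 ⊗ 1, U4 ⊗ 1 interleaved with the canonical tensor-factor permutation unitaries. Suppose P is an orthogonal projection on H_A such that U (P ⊗ 1_{B'C'G}) U* = 1_{ABC} ⊗ M for some operator M on H_F. Then for every linear operator R on H_C, [ U4 U3 U2 (P ⊗ 1_Ā) U2* U3* U4* , U4 (R ⊗ 1_C̄) U4* ] = 0 (as operators on H_F). -/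
/-!
Write the comb as `U1` followed by `U2`, `U3`, `U4`, each attached by one `combStep`: the new
unitary takes a fresh input wire together with the wire left open by the previous step.
Conjugating `1 ⊗ Q` through a `combStep` attached by an isometry `V` gives the previous
conjugate `S Q Sᴴ` ampliated by the identity on the fresh wire and then conjugated by `1 ⊗ V`.
So when the result is `1 ⊗ M`, undoing `V` shows that `S Q Sᴴ` acts as the identity on
everything except the open wire, and that `Vᴴ M V` is the same operator on that wire.
Starting from `1_{ABC} ⊗ M` and undoing `U4`, then `U3`, gives
`U3 U2 (P ⊗ 1) U2ᴴ U3ᴴ = 1_C ⊗ N`. Conjugated by `U4`, this commutes with `U4 (R ⊗ 1) U4ᴴ`.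
-/

open Matrix
open scoped Kronecker

def prodLeftComm {α β γ : Type*} (p : α × β × γ) : β × α × γ := (p.2.1, p.1, p.2.2)

def prodSwapFirstThird {α β γ δ : Type*} : α × β × γ × δ ≃ γ × β × α × δ where
  toFun q := (q.2.2.1, q.2.1, q.1, q.2.2.2)
  invFun q := (q.2.2.1, q.2.1, q.1, q.2.2.2)
  left_inv _ := rfl
  right_inv _ := rfl

namespace Matrix

variable {R : Type*} [CommSemiring R] {Ω X Y Z I : Type*}

theorem kronecker_one_submatrix_prodLeftComm [DecidableEq Ω] [DecidableEq Z] (K : Matrix X X R) :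
    (K ⊗ₖ (1 : Matrix (Ω × Z) (Ω × Z) R)).submatrix prodLeftComm prodLeftComm
      = 1 ⊗ₖ (K ⊗ₖ (1 : Matrix Z Z R)) := by
  ext ⟨ω, x, z⟩ ⟨ω', x', z'⟩
  simp only [kroneckerMap_apply, submatrix_apply, prodLeftComm, one_apply, Prod.mk.injEq, ite_and]
  split_ifs <;> simp

theorem one_kronecker_injective [DecidableEq Ω] [Nonempty Ω] :
    Function.Injective ((1 : Matrix Ω Ω R) ⊗ₖ · : Matrix Z Z R → Matrix (Ω × Z) (Ω × Z) R) := by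
  obtain ⟨ω⟩ := ‹Nonempty Ω›
  intro N N' h
  ext z z'
  simpa using congrFun (congrFun h (ω, z)) (ω, z')

theorem submatrix_prodAssoc_eq_one_kronecker_iff [DecidableEq Ω] [DecidableEq X]
    {T : Matrix (Ω × X × Z) (Ω × X × Z) R} {N : Matrix Z Z R} :
    T.submatrix (Equiv.prodAssoc Ω X Z) (Equiv.prodAssoc Ω X Z) = 1 ⊗ₖ N ↔
      T = 1 ⊗ₖ ((1 : Matrix X X R) ⊗ₖ N) := by
  rw [← kronecker_assoc', one_kronecker_one]
  constructor
  · rintro h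
    rw [← h]
    simp [submatrix_submatrix]
  · rintro rfl
    simp [submatrix_submatrix]

theorem exists_eq_one_kronecker_of_kronecker_submatrix_eq [DecidableEq Ω] [DecidableEq X]
    [Nonempty Ω] [Nonempty X] {T : Matrix (Ω × Z) (Ω × Z) R} {K : Matrix (X × Z) (X × Z) R}
    (h : ((1 : Matrix X X R) ⊗ₖ T).submatrix prodLeftComm prodLeftComm = 1 ⊗ₖ K) :
    ∃ N : Matrix Z Z R, T = 1 ⊗ₖ N ∧ K = 1 ⊗ₖ N := by
  obtain ⟨ω₀⟩ := ‹Nonempty Ω›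
  obtain ⟨x₀⟩ := ‹Nonempty X›
  have hT : ∀ ω ω' x x' z z', (if x = x' then T (ω, z) (ω', z') else 0)
      = if ω = ω' then K (x, z) (x', z') else 0 := fun ω ω' x x' z z' => by
    simpa [one_apply, prodLeftComm] using congrFun (congrFun h (ω, x, z)) (ω', x', z')
  have hT₀ : ∀ ω ω' z z', T (ω, z) (ω', z') = if ω = ω' then K (x₀, z) (x₀, z') else 0 :=
    fun ω ω' z z' => by simpa using hT ω ω' x₀ x₀ z z'
  refine ⟨of fun z z' => K (x₀, z) (x₀, z'), ?_, ?_⟩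
  · ext ⟨ω, z⟩ ⟨ω', z'⟩
    simp [hT₀, one_apply]
  · ext ⟨x, z⟩ ⟨x', z'⟩
    simpa [hT₀, one_apply, eq_comm] using hT ω₀ ω₀ x x' z z'

theorem commute_one_kronecker_kronecker_one [Fintype X] [DecidableEq X] [Fintype Z]
    [DecidableEq Z] (N : Matrix Z Z R) (K : Matrix X X R) :
    Commute ((1 : Matrix X X R) ⊗ₖ N) (K ⊗ₖ (1 : Matrix Z Z R)) := by
  rw [Commute, SemiconjBy, ← mul_kronecker_mul, ← mul_kronecker_mul]
  simp

section Conjugation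

variable [StarRing R] {m n l : Type*}

theorem submatrix_id_mul_mul_conjTranspose [Fintype n] (S : Matrix m n R) (Q : Matrix n n R)
    (e : l → m) : S.submatrix e id * Q * (S.submatrix e id)ᴴ = (S * Q * Sᴴ).submatrix e e := by
  rw [conjTranspose_submatrix, submatrix_mul _ _ _ id _ Function.bijective_id,
    submatrix_mul _ _ _ id _ Function.bijective_id]
  rfl

theorem eq_conjTranspose_mul_mul_of_mul_mul_conjTranspose_eq [Fintype m] [Fintype n]
    [DecidableEq n] {W : Matrix m n R} (hW : Wᴴ * W = 1) {T : Matrix n n R} {M : Matrix m m R}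
    (h : W * T * Wᴴ = M) : T = Wᴴ * M * W := by
  rw [← h, Matrix.mul_assoc, Matrix.mul_assoc, hW, Matrix.mul_one, ← Matrix.mul_assoc, hW,
    Matrix.one_mul]

theorem mul_mul_conjTranspose_mul_mul_mul_conjTranspose [Fintype m] [Fintype n] [DecidableEq n]
    {V : Matrix m n R} (hV : Vᴴ * V = 1) (A B : Matrix n n R) :
    V * A * Vᴴ * (V * B * Vᴴ) = V * (A * B) * Vᴴ := by
  simp only [Matrix.mul_assoc]
  rw [← Matrix.mul_assoc Vᴴ, hV, Matrix.one_mul]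

end Conjugation

/-- Feeds the open output wire `Z` of `S`, together with a fresh input wire `X`, into `V`. -/
def combStep [Fintype Ω] [DecidableEq Ω] [Fintype X] [DecidableEq X] [Fintype Z]
    (V : Matrix Y (X × Z) R) (S : Matrix (Ω × Z) I R) : Matrix (Ω × Y) (X × I) R :=
  ((1 : Matrix Ω Ω R) ⊗ₖ V) * ((1 : Matrix X X R) ⊗ₖ S).submatrix prodLeftComm id

section CombStep

variable [Fintype Ω] [DecidableEq Ω] [Fintype X] [DecidableEq X] [Fintype Z]

theorem combStep_apply (V : Matrix Y (X × Z) R) (S : Matrix (Ω × Z) I R) (ω : Ω) (y : Y)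
    (x : X) (i : I) : combStep V S (ω, y) (x, i) = ∑ z, V y (x, z) * S (ω, z) i := by
  simp [combStep, mul_apply, Fintype.sum_prod_type, one_apply, prodLeftComm]

variable [StarRing R] [Fintype I]

theorem combStep_mul_kronecker_mul_conjTranspose (V : Matrix Y (X × Z) R)
    (S : Matrix (Ω × Z) I R) (K : Matrix X X R) (Q : Matrix I I R) :
    combStep V S * (K ⊗ₖ Q) * (combStep V S)ᴴ
      = ((1 : Matrix Ω Ω R) ⊗ₖ V) * (K ⊗ₖ (S * Q * Sᴴ)).submatrix prodLeftComm prodLeftComm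
          * ((1 : Matrix Ω Ω R) ⊗ₖ V)ᴴ := by
  have hS : ((1 : Matrix X X R) ⊗ₖ S).submatrix prodLeftComm id * (K ⊗ₖ Q)
      * (((1 : Matrix X X R) ⊗ₖ S).submatrix prodLeftComm id)ᴴ
      = (K ⊗ₖ (S * Q * Sᴴ)).submatrix prodLeftComm prodLeftComm := by
    rw [submatrix_id_mul_mul_conjTranspose, conjTranspose_kronecker, ← mul_kronecker_mul,
      ← mul_kronecker_mul, Matrix.one_mul, conjTranspose_one, Matrix.mul_one]
  rw [combStep, conjTranspose_mul, ← hS]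
  simp only [Matrix.mul_assoc]

theorem exists_eq_one_kronecker_of_combStep_conj_eq [Fintype Y] [DecidableEq Z]
    [Nonempty Ω] [Nonempty X] {V : Matrix Y (X × Z) R} (hV : Vᴴ * V = 1)
    {S : Matrix (Ω × Z) I R} {Q : Matrix I I R} {M : Matrix Y Y R}
    (h : combStep V S * ((1 : Matrix X X R) ⊗ₖ Q) * (combStep V S)ᴴ = 1 ⊗ₖ M) :
    ∃ N : Matrix Z Z R, S * Q * Sᴴ = 1 ⊗ₖ N ∧ Vᴴ * M * V = 1 ⊗ₖ N := by
  rw [combStep_mul_kronecker_mul_conjTranspose] at h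
  have hW : ((1 : Matrix Ω Ω R) ⊗ₖ V)ᴴ * ((1 : Matrix Ω Ω R) ⊗ₖ V) = 1 := by
    rw [conjTranspose_kronecker, ← mul_kronecker_mul, hV]
    simp
  refine exists_eq_one_kronecker_of_kronecker_submatrix_eq
    ((eq_conjTranspose_mul_mul_of_mul_mul_conjTranspose_eq hW h).trans ?_)
  rw [conjTranspose_kronecker, ← mul_kronecker_mul, ← mul_kronecker_mul]
  simp

end CombStep

section Comb

variable {G A Abar B Bbar C Cbar F : Type*} [Fintype A] [DecidableEq A] [Fintype Abar]
  [Fintype B] [DecidableEq B] [Fintype Bbar] [Fintype C] [DecidableEq C] [Fintype Cbar]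

/-- The comb unitary `U` of the statement with its legs reordered: outputs `((A × B) × C) × F`,
inputs `C' × B' × A' × G`, the order in which `U2, U3, U4` attach them. -/
def comb (U1 : Matrix (A × Abar) G R) (U2 : Matrix (B × Bbar) (A × Abar) R)
    (U3 : Matrix (C × Cbar) (B × Bbar) R) (U4 : Matrix F (C × Cbar) R) :
    Matrix (((A × B) × C) × F) (C × B × A × G) R :=
  combStep U4 ((combStep U3 ((combStep U2 U1).submatrix (Equiv.prodAssoc A B Bbar) id)).submatrix
    (Equiv.prodAssoc (A × B) C Cbar) id)

theorem comb_apply (U1 : Matrix (A × Abar) G R) (U2 : Matrix (B × Bbar) (A × Abar) R)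
    (U3 : Matrix (C × Cbar) (B × Bbar) R) (U4 : Matrix F (C × Cbar) R) (a : A) (b : B) (c : C)
    (f : F) (a' : A) (b' : B) (c' : C) (g : G) :
    comb U1 U2 U3 U4 (((a, b), c), f) (c', b', a', g)
      = ∑ abar : Abar, ∑ bbar : Bbar, ∑ cbar : Cbar,
          U1 (a, abar) g * U2 (b, bbar) (a', abar) * U3 (c, cbar) (b', bbar) * U4 f (c', cbar) := by
  simp only [comb, combStep_apply, submatrix_apply, Equiv.prodAssoc_apply, id, Finset.mul_sum]
  rw [Finset.sum_comm]
  refine (Finset.sum_congr rfl fun _ _ => Finset.sum_comm).trans ?_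
  rw [Finset.sum_comm]
  refine Finset.sum_congr rfl fun _ _ => Finset.sum_congr rfl fun _ _ =>
    Finset.sum_congr rfl fun _ _ => by ring

variable [Fintype G] [DecidableEq G] [StarRing R] {U1 : Matrix (A × Abar) G R}
  {U2 : Matrix (B × Bbar) (A × Abar) R} {U3 : Matrix (C × Cbar) (B × Bbar) R}
  {U4 : Matrix F (C × Cbar) R} {P : Matrix A A R} {M : Matrix F F R}

theorem comb_conj_eq_of_conj_eq {U : Matrix ((A × (B × C)) × F) (A × (B × (C × G))) R}
    (hU : U = Matrix.of fun p q =>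
      ∑ abar : Abar, ∑ bbar : Bbar, ∑ cbar : Cbar,
        U1 (p.1.1, abar) q.2.2.2 * U2 (p.1.2.1, bbar) (q.1, abar) *
          U3 (p.1.2.2, cbar) (q.2.1, bbar) * U4 p.2 (q.2.2.1, cbar))
    (hM : U * ((P ⊗ₖ (1 : Matrix (B × (C × G)) (B × (C × G)) R))) * Uᴴ
      = (1 : Matrix (A × (B × C)) (A × (B × C)) R) ⊗ₖ M) :
    comb U1 U2 U3 U4 * ((1 : Matrix C C R) ⊗ₖ ((1 : Matrix B B R) ⊗ₖ (P ⊗ₖ (1 : Matrix G G R))))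
      * (comb U1 U2 U3 U4)ᴴ = (1 : Matrix ((A × B) × C) ((A × B) × C) R) ⊗ₖ M := by
  set r := (Equiv.prodAssoc A B C).symm.prodCongr (Equiv.refl F)
  have hU' : U = (comb U1 U2 U3 U4).submatrix r prodSwapFirstThird := by
    subst hU
    ext ⟨⟨a, b, c⟩, f⟩ ⟨a', b', c', g⟩
    simp [r, prodSwapFirstThird, comb_apply]
  have hP : P ⊗ₖ (1 : Matrix (B × (C × G)) (B × (C × G)) R)
      = (1 ⊗ₖ (1 ⊗ₖ (P ⊗ₖ 1))).submatrix prodSwapFirstThird prodSwapFirstThird := by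
    ext ⟨a, b, c, g⟩ ⟨a', b', c', g'⟩
    simp only [kroneckerMap_apply, submatrix_apply, prodSwapFirstThird, Equiv.coe_fn_mk, one_apply,
      Prod.mk.injEq, ite_and]
    split_ifs <;> simp
  have h1 : (1 : Matrix (A × (B × C)) (A × (B × C)) R) ⊗ₖ M = (1 ⊗ₖ M).submatrix r r := by
    ext ⟨⟨a, b, c⟩, f⟩ ⟨⟨a', b', c'⟩, f'⟩
    simp [r, one_apply, and_assoc]
  rw [hU', hP, h1, conjTranspose_submatrix, submatrix_mul_equiv, submatrix_mul_equiv] at hM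
  simpa [submatrix_submatrix] using congrArg (fun T => T.submatrix r.symm r.symm) hM

theorem exists_conj_eq_one_kronecker_of_comb_conj_eq [DecidableEq Abar] [DecidableEq Bbar]
    [DecidableEq Cbar] [Fintype F] [Nonempty A] [Nonempty B] [Nonempty C]
    (hU1 : U1 * U1ᴴ = 1) (hU3 : U3 * U3ᴴ = 1 ∧ U3ᴴ * U3 = 1) (hU4 : U4ᴴ * U4 = 1)
    (h : comb U1 U2 U3 U4
      * ((1 : Matrix C C R) ⊗ₖ ((1 : Matrix B B R) ⊗ₖ (P ⊗ₖ (1 : Matrix G G R))))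
      * (comb U1 U2 U3 U4)ᴴ = (1 : Matrix ((A × B) × C) ((A × B) × C) R) ⊗ₖ M) :
    ∃ N : Matrix Cbar Cbar R, U3 * (U2 * (P ⊗ₖ (1 : Matrix Abar Abar R)) * U2ᴴ) * U3ᴴ = 1 ⊗ₖ N := by
  obtain ⟨N, hS3, -⟩ := exists_eq_one_kronecker_of_combStep_conj_eq hU4 h
  rw [submatrix_id_mul_mul_conjTranspose, submatrix_prodAssoc_eq_one_kronecker_iff] at hS3
  obtain ⟨W, hS2, hW⟩ := exists_eq_one_kronecker_of_combStep_conj_eq hU3.2 hS3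
  have hQ : U2 * (P ⊗ₖ (1 : Matrix Abar Abar R)) * U2ᴴ = 1 ⊗ₖ W := by
    refine one_kronecker_injective (Ω := A) ?_
    rwa [submatrix_id_mul_mul_conjTranspose, submatrix_prodAssoc_eq_one_kronecker_iff,
      combStep_mul_kronecker_mul_conjTranspose, Matrix.mul_one, hU1,
      kronecker_one_submatrix_prodLeftComm, conjTranspose_kronecker, ← mul_kronecker_mul,
      ← mul_kronecker_mul, Matrix.mul_one, conjTranspose_one, Matrix.mul_one] at hS2
  refine ⟨N, ?_⟩
  rw [hQ, ← hW]
  simp only [← Matrix.mul_assoc, hU3.1, Matrix.one_mul]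
  simp only [Matrix.mul_assoc, hU3.1, Matrix.mul_one]

end Comb

end Matrix

theorem stmt3_general {G A Abar B Bbar C Cbar F : Type}
    [Fintype G] [DecidableEq G] [Fintype A] [DecidableEq A]
    [Fintype Abar] [DecidableEq Abar] [Fintype B] [DecidableEq B]
    [Fintype Bbar] [DecidableEq Bbar] [Fintype C] [DecidableEq C]
    [Fintype Cbar] [DecidableEq Cbar] [Fintype F] [DecidableEq F]
    (U1 : Matrix (A × Abar) G ℂ) (hU1 : U1 * U1ᴴ = 1 ∧ U1ᴴ * U1 = 1)
    (U2 : Matrix (B × Bbar) (A × Abar) ℂ)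
    (U3 : Matrix (C × Cbar) (B × Bbar) ℂ) (hU3 : U3 * U3ᴴ = 1 ∧ U3ᴴ * U3 = 1)
    (U4 : Matrix F (C × Cbar) ℂ) (hU4 : U4 * U4ᴴ = 1 ∧ U4ᴴ * U4 = 1)
    (U : Matrix ((A × (B × C)) × F) (A × (B × (C × G))) ℂ)
    (hU : U = Matrix.of fun p q =>
      ∑ abar : Abar, ∑ bbar : Bbar, ∑ cbar : Cbar,
        U1 (p.1.1, abar) q.2.2.2 * U2 (p.1.2.1, bbar) (q.1, abar) *
          U3 (p.1.2.2, cbar) (q.2.1, bbar) * U4 p.2 (q.2.2.1, cbar))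
    (P : Matrix A A ℂ)
    (M : Matrix F F ℂ)
    (hM : U * ((P ⊗ₖ (1 : Matrix (B × (C × G)) (B × (C × G)) ℂ))) * Uᴴ
      = (1 : Matrix (A × (B × C)) (A × (B × C)) ℂ) ⊗ₖ M) :
    ∀ R : Matrix C C ℂ,
      (U4 * (U3 * (U2 * (P ⊗ₖ (1 : Matrix Abar Abar ℂ)) * U2ᴴ) * U3ᴴ) * U4ᴴ) *
          (U4 * (R ⊗ₖ (1 : Matrix Cbar Cbar ℂ)) * U4ᴴ)
        = (U4 * (R ⊗ₖ (1 : Matrix Cbar Cbar ℂ)) * U4ᴴ) *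
          (U4 * (U3 * (U2 * (P ⊗ₖ (1 : Matrix Abar Abar ℂ)) * U2ᴴ) * U3ᴴ) * U4ᴴ) := by
  intro R
  obtain ⟨N, hN⟩ : ∃ N : Matrix Cbar Cbar ℂ,
      U3 * (U2 * (P ⊗ₖ (1 : Matrix Abar Abar ℂ)) * U2ᴴ) * U3ᴴ = 1 ⊗ₖ N := by
    rcases isEmpty_or_nonempty A with hA | hA
    · exact ⟨0, by simp [Subsingleton.elim (P ⊗ₖ (1 : Matrix Abar Abar ℂ)) 0]⟩
    rcases isEmpty_or_nonempty B with hB | hB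
    · exact ⟨0, by simp [Subsingleton.elim (U2 * (P ⊗ₖ (1 : Matrix Abar Abar ℂ)) * U2ᴴ) 0]⟩
    rcases isEmpty_or_nonempty C with hC | hC
    · exact ⟨0, Subsingleton.elim _ _⟩
    exact exists_conj_eq_one_kronecker_of_comb_conj_eq hU1.1 hU3 hU4.2
      (comb_conj_eq_of_conj_eq hU hM)
  rw [hN, mul_mul_conjTranspose_mul_mul_mul_conjTranspose hU4.2,
    mul_mul_conjTranspose_mul_mul_mul_conjTranspose hU4.2,
    (commute_one_kronecker_kronecker_one N R).eq]

/-- core commutation result of Appendix D of the paper.  Let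
`U1 : H_G → H_A ⊗ H_Ā`, `U2 : H_A ⊗ H_Ā → H_B ⊗ H_B̄`, `U3 : H_B ⊗ H_B̄ → H_C ⊗ H_C̄`,
`U4 : H_C ⊗ H_C̄ → H_F` be unitaries, and `U` the associated comb unitary
`H_{A'} ⊗ H_{B'} ⊗ H_{C'} ⊗ H_G → H_A ⊗ H_B ⊗ H_C ⊗ H_F`, given entrywise by
`U((a,b,c),f)((a',(b',(c',g)))) = Σ_{ā,b̄,c̄} U1(a,ā)(g)·U2(b,b̄)(a',ā)·U3(c,c̄)(b',b̄)·U4(f)(c',c̄)`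
(the composite of the `Ui ⊗ 1` interleaved with the canonical tensor-factor permutations).
If `P` is an orthogonal projection on `H_A` with `U(P ⊗ 1_{B'C'G})U* = 1_{ABC} ⊗ M` for some
`M` on `H_F`, then `U4U3U2(P ⊗ 1_Ā)U2*U3*U4*` commutes with `U4(R ⊗ 1_C̄)U4*` for every
operator `R` on `H_C`. -/
theorem stmt3 {G A Abar B Bbar C Cbar F : Type}
    [Fintype G] [DecidableEq G] [Fintype A] [DecidableEq A]
    [Fintype Abar] [DecidableEq Abar] [Fintype B] [DecidableEq B]
    [Fintype Bbar] [DecidableEq Bbar] [Fintype C] [DecidableEq C]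
    [Fintype Cbar] [DecidableEq Cbar] [Fintype F] [DecidableEq F]
    (U1 : Matrix (A × Abar) G ℂ) (hU1 : U1 * U1ᴴ = 1 ∧ U1ᴴ * U1 = 1)
    (U2 : Matrix (B × Bbar) (A × Abar) ℂ) (hU2 : U2 * U2ᴴ = 1 ∧ U2ᴴ * U2 = 1)
    (U3 : Matrix (C × Cbar) (B × Bbar) ℂ) (hU3 : U3 * U3ᴴ = 1 ∧ U3ᴴ * U3 = 1)
    (U4 : Matrix F (C × Cbar) ℂ) (hU4 : U4 * U4ᴴ = 1 ∧ U4ᴴ * U4 = 1)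
    (U : Matrix ((A × (B × C)) × F) (A × (B × (C × G))) ℂ)
    (hU : U = Matrix.of fun p q =>
      ∑ abar : Abar, ∑ bbar : Bbar, ∑ cbar : Cbar,
        U1 (p.1.1, abar) q.2.2.2 * U2 (p.1.2.1, bbar) (q.1, abar) *
          U3 (p.1.2.2, cbar) (q.2.1, bbar) * U4 p.2 (q.2.2.1, cbar))
    (P : Matrix A A ℂ) (hP : Pᴴ = P ∧ P * P = P)
    (M : Matrix F F ℂ)
    (hM : U * ((P ⊗ₖ (1 : Matrix (B × (C × G)) (B × (C × G)) ℂ))) * Uᴴ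
      = (1 : Matrix (A × (B × C)) (A × (B × C)) ℂ) ⊗ₖ M) :
    ∀ R : Matrix C C ℂ,
      (U4 * (U3 * (U2 * (P ⊗ₖ (1 : Matrix Abar Abar ℂ)) * U2ᴴ) * U3ᴴ) * U4ᴴ) *
          (U4 * (R ⊗ₖ (1 : Matrix Cbar Cbar ℂ)) * U4ᴴ)
        = (U4 * (R ⊗ₖ (1 : Matrix Cbar Cbar ℂ)) * U4ᴴ) *
          (U4 * (U3 * (U2 * (P ⊗ₖ (1 : Matrix Abar Abar ℂ)) * U2ᴴ) * U3ᴴ) * U4ᴴ) :=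
  stmt3_general U1 hU1 U2 U3 hU3 U4 hU4 U hU P M hM
end

section
/- Let H be a finite-dimensional complex Hilbert space, n ≥ 1, and let A_1, …, A_n and B_1, …, B_n be orthogonal projections on H such that A_m A_k = A_k A_m for all m, k; B_m B_k = B_k B_m for all m, k; and A_m B_k = B_k A_m whenever k < m. Then Tr( B_n A_n ⋯ B_1 A_1 · A_1 B_1 ⋯ A_n B_n ) = Tr( A_1 B_1 ⋯ A_n B_n ). Equivalently, with d = dim H, Tr( B_n A_n ⋯ B_1 A_1 (1/d) A_1 B_1 ⋯ A_n B_n ) = (1/d) Tr( A_1 B_1 ⋯ A_n B_n ). -/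
/-!
Write `R = A₁B₁ ⋯ AₙBₙ`. Each `Aₖ` slides leftwards through the factors `AₘBₘ` with `m < k`
and each `Bₖ` slides rightwards through those with `m > k`, so idempotency gives
`Aₖ R = R = R Bₖ`. In `BₙAₙ ⋯ B₁A₁ · R` every `Aₖ` then passes the `Bⱼ` (`j < k`) to its right
and is absorbed by `R`, leaving `Bₙ ⋯ B₁ · R`; cycling the trace, the `B`'s are absorbed by `R`.
-/

open Matrix

namespace List

variable {M : Type*} [Monoid M]

theorem commute_prod_ofFn_right {n : ℕ} {y : M} {f : Fin n → M} (h : ∀ i, Commute y (f i)) :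
    Commute y (ofFn f).prod :=
  Commute.list_prod_right _ _ fun _ hx => by
    obtain ⟨i, rfl⟩ := mem_ofFn.mp hx
    exact h i

theorem mul_prod_eq_self {x : M} {l : List M} (h : ∀ b ∈ l, x * b = x) : x * l.prod = x := by
  induction l with
  | nil => exact mul_one x
  | cons b l ih =>
    rw [prod_cons, ← mul_assoc, h b mem_cons_self, ih fun c hc => h c (mem_cons_of_mem b hc)]

end List

section Absorption

variable {M : Type*} [Monoid M]

open List

theorem mul_prod_ofFn_mul_eq_self {n : ℕ} (A B : Fin n → M)
    (hA : ∀ k, IsIdempotentElem (A k)) (hAA : ∀ m k, Commute (A m) (A k))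
    (hAB : ∀ m k, k < m → Commute (A m) (B k)) (k : Fin n) :
    A k * (ofFn fun m => A m * B m).prod = (ofFn fun m => A m * B m).prod := by
  induction n with
  | zero => exact k.elim0
  | succ n ih =>
    rw [ofFn_succ', prod_concat]
    induction k using Fin.lastCases with
    | last =>
      have hcomm : Commute (A (Fin.last n))
          (ofFn fun m : Fin n => A m.castSucc * B m.castSucc).prod :=
        commute_prod_ofFn_right fun m =>
          (hAA _ _).mul_right (hAB _ _ (Fin.castSucc_lt_last m))
      rw [← mul_assoc, hcomm.eq, mul_assoc, ← mul_assoc (A _), hA]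
    | cast k =>
      rw [← mul_assoc, ih (fun m => A m.castSucc) (fun m => B m.castSucc) (fun _ => hA _)
        (fun _ _ => hAA _ _) (fun _ _ h => hAB _ _ (Fin.castSucc_lt_castSucc_iff.mpr h))]

theorem prod_ofFn_mul_mul_eq_self {n : ℕ} (A B : Fin n → M)
    (hB : ∀ k, IsIdempotentElem (B k)) (hBB : ∀ m k, Commute (B m) (B k))
    (hAB : ∀ m k, k < m → Commute (A m) (B k)) (k : Fin n) :
    (ofFn fun m => A m * B m).prod * B k = (ofFn fun m => A m * B m).prod := by
  induction n with
  | zero => exact k.elim0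
  | succ n ih =>
    rw [ofFn_succ, prod_cons]
    induction k using Fin.cases with
    | zero =>
      have hcomm : Commute (B 0) (ofFn fun m : Fin n => A m.succ * B m.succ).prod :=
        commute_prod_ofFn_right fun m => ((hAB _ _ m.succ_pos).symm).mul_right (hBB _ _)
      rw [mul_assoc, ← hcomm.eq, ← mul_assoc, mul_assoc (A 0), hB]
    | succ k =>
      rw [mul_assoc, ih (fun m => A m.succ) (fun m => B m.succ) (fun _ => hB _)
        (fun _ _ => hBB _ _) (fun _ _ h => hAB _ _ (Fin.succ_lt_succ_iff.mpr h))]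

theorem prod_reverse_ofFn_mul_mul_eq {n : ℕ} (A B : Fin n → M) {x : M}
    (hx : ∀ k, A k * x = x) (hAB : ∀ m k, k < m → Commute (A m) (B k)) :
    (ofFn fun k => B k * A k).reverse.prod * x = (ofFn B).reverse.prod * x := by
  induction n with
  | zero => rfl
  | succ n ih =>
    have hcomm : Commute (A (Fin.last n)) (ofFn fun k : Fin n => B k.castSucc).reverse.prod :=
      Commute.list_prod_right _ _ fun b hb => by
        obtain ⟨k, rfl⟩ := mem_ofFn.mp (mem_reverse.mp hb)
        exact hAB _ _ (Fin.castSucc_lt_last k)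
    rw [ofFn_succ', ofFn_succ', concat_eq_append, concat_eq_append, reverse_concat,
      reverse_concat, prod_cons, prod_cons, mul_assoc, mul_assoc, ih (fun k => A k.castSucc) (fun k => B k.castSucc) (fun _ => hx _)
        (fun _ _ h => hAB _ _ (Fin.castSucc_lt_castSucc_iff.mpr h)),
      mul_assoc, ← mul_assoc (A _), hcomm.eq, mul_assoc, hx]

end Absorption

theorem stmt4_general {d : Type} [Fintype d] [DecidableEq d] {n : ℕ}
    (A B : Fin n → Matrix d d ℂ)
    (hAidem : ∀ k, A k * A k = A k)
    (hBidem : ∀ k, B k * B k = B k)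
    (hAA : ∀ m k, A m * A k = A k * A m)
    (hBB : ∀ m k, B m * B k = B k * B m)
    (hAB : ∀ m k : Fin n, k < m → A m * B k = B k * A m) :
    Matrix.trace ((List.ofFn (fun k => B k * A k)).reverse.prod *
        (List.ofFn (fun k => A k * B k)).prod)
      = Matrix.trace ((List.ofFn (fun k => A k * B k)).prod) := by
  have hAR := mul_prod_ofFn_mul_eq_self A B hAidem hAA hAB
  have hRB := prod_ofFn_mul_mul_eq_self A B hBidem hBB hAB
  rw [prod_reverse_ofFn_mul_mul_eq A B hAR hAB, trace_mul_comm,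
    List.mul_prod_eq_self fun b hb => ?_]
  obtain ⟨k, rfl⟩ := List.mem_ofFn.mp (List.mem_reverse.mp hb)
  exact hRB k

/-- Let `H` be a finite-dimensional complex Hilbert space (modelled as `ℂ^d`
with operators given by matrices), `n ≥ 1`, and `A_1, …, A_n`, `B_1, …, B_n` orthogonal
projections such that the `A`'s commute among themselves, the `B`'s commute among themselves,
and `A_m` commutes with `B_k` whenever `k < m`.  Then
`Tr(B_n A_n ⋯ B_1 A_1 · A_1 B_1 ⋯ A_n B_n) = Tr(A_1 B_1 ⋯ A_n B_n)`. -/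
theorem stmt4 {d : Type} [Fintype d] [DecidableEq d] {n : ℕ} (hn : 1 ≤ n)
    (A B : Fin n → Matrix d d ℂ)
    (hAherm : ∀ k, (A k)ᴴ = A k) (hAidem : ∀ k, A k * A k = A k)
    (hBherm : ∀ k, (B k)ᴴ = B k) (hBidem : ∀ k, B k * B k = B k)
    (hAA : ∀ m k, A m * A k = A k * A m)
    (hBB : ∀ m k, B m * B k = B k * B m)
    (hAB : ∀ m k : Fin n, k < m → A m * B k = B k * A m) :
    Matrix.trace ((List.ofFn (fun k => B k * A k)).reverse.prod *
        (List.ofFn (fun k => A k * B k)).prod)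
      = Matrix.trace ((List.ofFn (fun k => A k * B k)).prod) :=
  stmt4_general A B hAidem hBidem hAA hBB hAB
end

section
/- Let H_Z, H_G, H_W, H_S, H_X, H_F, H_A be finite-dimensional complex Hilbert spaces, and let U : H_Z ⊗ H_G → H_W ⊗ H_S and V : H_S ⊗ H_X → H_F ⊗ H_A be unitary operators. Let {P_Z^i}, {P_W^j}, {P_X^x}, {P_A^a} be projective decompositions on H_Z, H_W, H_X, H_A respectively. Define operators on H_S by ρ^{ij} := Tr_W( U(P_Z^i ⊗ 1_G)U* · (P_W^j ⊗ 1_S) ) and σ^{ax} := Tr_X( V*(1_F ⊗ P_A^a)V · (1_S ⊗ P_X^x) ). If [ U(P_Z^i ⊗ 1_G)U* ⊗ 1_X , 1_W ⊗ V*(1_F ⊗ P_A^a)V ] = 0 for all i and a (i.e., there is no interference influence from {P_Z^i} to {P_A^a} through the composite circuit), then [ρ^{ij}, σ^{ax}] = 0 for all i, j, a, x. Consequently, a complementarity scenario — one in which [ρ^{ij}, σ^{ax}] ≠ 0 for some i, j, a, x — requires an interference influence from {P_Z^i} to {P_A^a}. -/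
open Matrix
open scoped Kronecker

/-- Partial trace over the first tensor factor. -/
noncomputable def ptraceLeft {m n : Type} [Fintype m]
    (T : Matrix (m × n) (m × n) ℂ) : Matrix n n ℂ :=
  Matrix.of fun s s' => ∑ w, T (w, s) (w, s')

/-- Partial trace over the second tensor factor. -/
noncomputable def ptraceRight {m n : Type} [Fintype n]
    (T : Matrix (m × n) (m × n) ℂ) : Matrix m m ℂ :=
  Matrix.of fun s s' => ∑ w, T (s, w) (s', w)

/-- Cycle the outermost of five nested sums to the innermost position. -/
lemma sum5cycle {α β γ δ ε : Type} [Fintype α] [Fintype β] [Fintype γ] [Fintype δ] [Fintype ε]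
    (f : α → β → γ → δ → ε → ℂ) :
    ∑ a, ∑ b, ∑ c, ∑ d, ∑ e, f a b c d e = ∑ b, ∑ c, ∑ d, ∑ e, ∑ a, f a b c d e := by
  have h1 : ∑ a, ∑ q : β × γ × δ × ε, f a q.1 q.2.1 q.2.2.1 q.2.2.2
      = ∑ a, ∑ b, ∑ c, ∑ d, ∑ e, f a b c d e := by
    simp [Fintype.sum_prod_type]
  have h2 : ∑ q : β × γ × δ × ε, ∑ a, f a q.1 q.2.1 q.2.2.1 q.2.2.2
      = ∑ b, ∑ c, ∑ d, ∑ e, ∑ a, f a b c d e := by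
    simp [Fintype.sum_prod_type]
  rw [← h1, ← h2, Finset.sum_comm]

/-- Swap the outer pair with the inner pair in four nested sums. -/
lemma sum4swap {α β γ δ : Type} [Fintype α] [Fintype β] [Fintype γ] [Fintype δ]
    (f : α → β → γ → δ → ℂ) :
    ∑ a, ∑ b, ∑ c, ∑ d, f a b c d = ∑ c, ∑ d, ∑ a, ∑ b, f a b c d := by
  have h1 : ∑ p : α × β, ∑ q : γ × δ, f p.1 p.2 q.1 q.2
      = ∑ a, ∑ b, ∑ c, ∑ d, f a b c d := by
    simp [Fintype.sum_prod_type]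
  have h2 : ∑ q : γ × δ, ∑ p : α × β, f p.1 p.2 q.1 q.2
      = ∑ c, ∑ d, ∑ a, ∑ b, f a b c d := by
    simp [Fintype.sum_prod_type]
  rw [← h1, ← h2, Finset.sum_comm]

/-- Entrywise form of the no-interference hypothesis. -/
lemma keyAux {W S X : Type} [Fintype W] [DecidableEq W] [Fintype S] [DecidableEq S]
    [Fintype X] [DecidableEq X]
    (M : Matrix (W × S) (W × S) ℂ) (N : Matrix (S × X) (S × X) ℂ)
    (h : (Matrix.reindex (Equiv.prodAssoc W S X) (Equiv.prodAssoc W S X)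
          (M ⊗ₖ (1 : Matrix X X ℂ))) * ((1 : Matrix W W ℂ) ⊗ₖ N)
      = ((1 : Matrix W W ℂ) ⊗ₖ N) *
        (Matrix.reindex (Equiv.prodAssoc W S X) (Equiv.prodAssoc W S X)
          (M ⊗ₖ (1 : Matrix X X ℂ))))
    (w w' : W) (s s' : S) (x x' : X) :
    ∑ s'', M (w, s) (w', s'') * N (s'', x) (s', x')
      = ∑ s'', N (s, x) (s'', x') * M (w, s'') (w', s') := by
  have h2 := congrFun (congrFun h (w, s, x)) (w', s', x')
  simp [Matrix.mul_apply, Matrix.reindex_apply, Matrix.submatrix_apply,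
    Equiv.prodAssoc, Matrix.one_apply, Fintype.sum_prod_type, mul_ite, ite_mul,
    Finset.sum_ite_eq, Finset.sum_ite_eq'] at h2
  convert h2 using 2

/-- Entrywise form of the prepared states. -/
lemma ptlAux {W S : Type} [Fintype W] [DecidableEq W] [Fintype S] [DecidableEq S]
    (M : Matrix (W × S) (W × S) ℂ) (Q : Matrix W W ℂ) (s s' : S) :
    ptraceLeft (M * (Q ⊗ₖ (1 : Matrix S S ℂ))) s s'
      = ∑ w, ∑ w'', M (w, s) (w'', s') * Q w'' w := by
  simp [ptraceLeft, Matrix.mul_apply, Fintype.sum_prod_type, Matrix.one_apply,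
    mul_ite, ite_mul, Finset.sum_ite_eq, Finset.sum_ite_eq']

/-- Entrywise form of the effects. -/
lemma ptrAux {S X : Type} [Fintype X] [DecidableEq X] [Fintype S] [DecidableEq S]
    (N : Matrix (S × X) (S × X) ℂ) (Q : Matrix X X ℂ) (s s' : S) :
    ptraceRight (N * ((1 : Matrix S S ℂ) ⊗ₖ Q)) s s'
      = ∑ x0, ∑ x'', N (s, x0) (s', x'') * Q x'' x0 := by
  simp [ptraceRight, Matrix.mul_apply, Fintype.sum_prod_type, Matrix.one_apply,
    mul_ite, ite_mul, Finset.sum_ite_eq, Finset.sum_ite_eq']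

/-- Theorem 4 of the paper.  In the circuit with unitaries
`U : H_Z ⊗ H_G → H_W ⊗ H_S` and `V : H_S ⊗ H_X → H_F ⊗ H_A`, if there is no interference
influence from `{P_Z^i}` to `{P_A^a}` (all Heisenberg commutators on `H_W ⊗ H_S ⊗ H_X`
vanish), then every prepared state `ρ^{ij} = Tr_W(U(P_Z^i ⊗ 1_G)U*·(P_W^j ⊗ 1_S))` commutes
with every effect `σ^{ax} = Tr_X(V*(1_F ⊗ P_A^a)V·(1_S ⊗ P_X^x))`; hence a complementarity
scenario requires an interference influence from `{P_Z^i}` to `{P_A^a}`. -/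
theorem stmt6 {Z G W S X F A : Type}
    [Fintype Z] [DecidableEq Z] [Fintype G] [DecidableEq G] [Fintype W] [DecidableEq W]
    [Fintype S] [DecidableEq S] [Fintype X] [DecidableEq X] [Fintype F] [DecidableEq F]
    [Fintype A] [DecidableEq A]
    {I J XI AI : Type} [Fintype I] [Fintype J] [Fintype XI] [Fintype AI]
    (U : Matrix (W × S) (Z × G) ℂ) (hU : U * Uᴴ = 1 ∧ Uᴴ * U = 1)
    (V : Matrix (F × A) (S × X) ℂ) (hV : V * Vᴴ = 1 ∧ Vᴴ * V = 1)
    (PZ : I → Matrix Z Z ℂ) (PW : J → Matrix W W ℂ)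
    (PX : XI → Matrix X X ℂ) (PA : AI → Matrix A A ℂ)
    (hPZ : IsProjDecomp PZ) (hPW : IsProjDecomp PW)
    (hPX : IsProjDecomp PX) (hPA : IsProjDecomp PA)
    (ρ : I → J → Matrix S S ℂ)
    (hρ : ∀ i j, ρ i j = ptraceLeft
      ((U * (PZ i ⊗ₖ (1 : Matrix G G ℂ)) * Uᴴ) * (PW j ⊗ₖ (1 : Matrix S S ℂ))))
    (σ : AI → XI → Matrix S S ℂ)
    (hσ : ∀ a x, σ a x = ptraceRight
      ((Vᴴ * ((1 : Matrix F F ℂ) ⊗ₖ PA a) * V) * ((1 : Matrix S S ℂ) ⊗ₖ PX x)))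
    (hnoint : ∀ (i : I) (a : AI),
      (Matrix.reindex (Equiv.prodAssoc W S X) (Equiv.prodAssoc W S X)
          ((U * (PZ i ⊗ₖ (1 : Matrix G G ℂ)) * Uᴴ) ⊗ₖ (1 : Matrix X X ℂ))) *
        ((1 : Matrix W W ℂ) ⊗ₖ (Vᴴ * ((1 : Matrix F F ℂ) ⊗ₖ PA a) * V))
      = ((1 : Matrix W W ℂ) ⊗ₖ (Vᴴ * ((1 : Matrix F F ℂ) ⊗ₖ PA a) * V)) *
        (Matrix.reindex (Equiv.prodAssoc W S X) (Equiv.prodAssoc W S X)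
          ((U * (PZ i ⊗ₖ (1 : Matrix G G ℂ)) * Uᴴ) ⊗ₖ (1 : Matrix X X ℂ)))) :
    ∀ (i : I) (j : J) (a : AI) (x : XI), ρ i j * σ a x = σ a x * ρ i j := by
  intro i j a x
  obtain ⟨M, hM⟩ : ∃ M', M' = U * (PZ i ⊗ₖ (1 : Matrix G G ℂ)) * Uᴴ := ⟨_, rfl⟩
  obtain ⟨N, hN⟩ : ∃ N', N' = Vᴴ * ((1 : Matrix F F ℂ) ⊗ₖ PA a) * V := ⟨_, rfl⟩
  have key := keyAux M N (by rw [hM, hN]; exact hnoint i a)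
  have hρ' : ∀ s s', ρ i j s s' = ∑ w, ∑ w'', M (w, s) (w'', s') * PW j w'' w := by
    intro s s'
    rw [hρ, ← hM]
    exact ptlAux M (PW j) s s'
  have hσ' : ∀ s s', σ a x s s' = ∑ x0, ∑ x'', N (s, x0) (s', x'') * PX x x'' x0 := by
    intro s s'
    rw [hσ, ← hN]
    exact ptrAux N (PX x) s s'
  ext s s'
  rw [Matrix.mul_apply, Matrix.mul_apply]
  calc
    ∑ s'', ρ i j s s'' * σ a x s'' s'
        = ∑ w, ∑ w'', ∑ x0, ∑ x'', (PW j w'' w * PX x x'' x0) *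
            ∑ s'', M (w, s) (w'', s'') * N (s'', x0) (s', x'') := by
          simp only [hρ', hσ', Finset.sum_mul, Finset.mul_sum]
          rw [sum5cycle (fun s'' x0 x'' w w'' =>
            M (w, s) (w'', s'') * PW j w'' w * (N (s'', x0) (s', x'') * PX x x'' x0))]
          rw [sum4swap (fun x0 x'' w w'' => ∑ s'',
            M (w, s) (w'', s'') * PW j w'' w * (N (s'', x0) (s', x'') * PX x x'' x0))]
          refine Finset.sum_congr rfl fun w _ => Finset.sum_congr rfl fun w'' _ =>
            Finset.sum_congr rfl fun x0 _ => Finset.sum_congr rfl fun x'' _ =>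
            Finset.sum_congr rfl fun s'' _ => ?_
          ring
    _ = ∑ w, ∑ w'', ∑ x0, ∑ x'', (PW j w'' w * PX x x'' x0) *
            ∑ s'', N (s, x0) (s'', x'') * M (w, s'') (w'', s') := by
          refine Finset.sum_congr rfl fun w _ => Finset.sum_congr rfl fun w'' _ =>
            Finset.sum_congr rfl fun x0 _ => Finset.sum_congr rfl fun x'' _ => ?_
          rw [key w w'' s s' x0 x'']
    _ = ∑ x0, ∑ x'', ∑ w, ∑ w'', (PW j w'' w * PX x x'' x0) *
            ∑ s'', N (s, x0) (s'', x'') * M (w, s'') (w'', s') := by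
          rw [sum4swap (fun w w'' x0 x'' => (PW j w'' w * PX x x'' x0) *
            ∑ s'', N (s, x0) (s'', x'') * M (w, s'') (w'', s'))]
    _ = ∑ s'', σ a x s s'' * ρ i j s'' s' := by
          simp only [hρ', hσ', Finset.sum_mul, Finset.mul_sum]
          rw [sum5cycle (fun s'' w w'' x0 x'' =>
            N (s, x0) (s'', x'') * PX x x'' x0 * (M (w, s'') (w'', s') * PW j w'' w))]
          rw [sum4swap (fun w w'' x0 x'' => ∑ s'',
            N (s, x0) (s'', x'') * PX x x'' x0 * (M (w, s'') (w'', s') * PW j w'' w))]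
          refine Finset.sum_congr rfl fun x0 _ => Finset.sum_congr rfl fun x'' _ =>
            Finset.sum_congr rfl fun w _ => Finset.sum_congr rfl fun w'' _ =>
            Finset.sum_congr rfl fun s'' _ => ?_
          ring
end

section
/- Let H_Z, H_G, H_W, H_S, H_{X1}, H_F, H_{A1}, H_{X2}, H_H, H_{A2} be finite-dimensional complex Hilbert spaces, and let U : H_Z ⊗ H_G → H_W ⊗ H_S, V : H_S ⊗ H_{X1} → H_F ⊗ H_{A1}, and W : H_F ⊗ H_{A1} ⊗ H_{X2} → H_H ⊗ H_{A2} be unitary operators. Let {P_Z^i}, {P_W^j}, {P_{X1}^{x1}}, {P_{A1}^{a1}}, {P_{X2}^{x2}}, {P_{A2}^{a2}} be projective decompositions on the corresponding spaces. Define ρ^{ij} := Tr_W( U(P_Z^i ⊗ 1_G)U* · (P_W^j ⊗ 1_S) ) and σ^{a1 x1} := Tr_{X1}( V*(1_F ⊗ P_{A1}^{a1})V · (1_S ⊗ P_{X1}^{x1}) ), both operators on H_S, and τ^{a2 x2} := Tr_{X2}( W*(1_H ⊗ P_{A2}^{a2})W · (1_{F A1} ⊗ P_{X2}^{x2}) ),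 an operator on H_F ⊗ H_{A1}. Suppose (Wigner's friend scenario): there exist i, j, a1, x1 with [ρ^{ij}, σ^{a1 x1}] ≠ 0, and there exist a1, x2, a2 with [ 1_F ⊗ P_{A1}^{a1}, τ^{a2 x2} ] ≠ 0. Then: (a) there exist i, a1 with [ U(P_Z^i ⊗ 1_G)U* ⊗ 1_{X1} , 1_W ⊗ V*(1_F ⊗ P_{A1}^{a1})V ] ≠ 0 (an interference influence from {P_Z^i} to {P_{A1}^{a1}}), and (b) there exist a1, a2 with [ 1_F ⊗ P_{A1}^{a1} ⊗ 1_{X2} , W*(1_H ⊗ P_{A2}^{a2})W ] ≠ 0 (an interference influence from {P_{A1}^{a1}} to {P_{A2}^{a2}}). -/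
open Matrix
open scoped Kronecker

lemma sum_comm5 {T A B C D : Type} [Fintype T] [Fintype A] [Fintype B] [Fintype C] [Fintype D]
    (f : T → A → B → C → D → ℂ) :
    ∑ t, ∑ a, ∑ b, ∑ c, ∑ d, f t a b c d = ∑ a, ∑ b, ∑ c, ∑ d, ∑ t, f t a b c d := by
  rw [Finset.sum_comm]
  refine Finset.sum_congr rfl fun a _ => ?_
  rw [Finset.sum_comm]
  refine Finset.sum_congr rfl fun b _ => ?_
  rw [Finset.sum_comm]
  refine Finset.sum_congr rfl fun c _ => ?_
  exact Finset.sum_comm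

lemma sum4_rot {A B C D : Type} [Fintype A] [Fintype B] [Fintype C] [Fintype D]
    (f : A → B → C → D → ℂ) :
    ∑ a, ∑ b, ∑ c, ∑ d, f a b c d = ∑ c, ∑ d, ∑ a, ∑ b, f a b c d := by
  have h1 : ∀ (g : B → C → D → ℂ), ∑ b, ∑ c, ∑ d, g b c d = ∑ c, ∑ d, ∑ b, g b c d := by
    intro g
    rw [Finset.sum_comm]
    exact Finset.sum_congr rfl fun c _ => Finset.sum_comm
  calc ∑ a, ∑ b, ∑ c, ∑ d, f a b c d
      = ∑ a, ∑ c, ∑ d, ∑ b, f a b c d := Finset.sum_congr rfl fun a _ => h1 _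
    _ = ∑ c, ∑ a, ∑ d, ∑ b, f a b c d := Finset.sum_comm
    _ = ∑ c, ∑ d, ∑ a, ∑ b, f a b c d := Finset.sum_congr rfl fun c _ => Finset.sum_comm

lemma lemA {W S X : Type} [Fintype W] [DecidableEq W] [Fintype S] [DecidableEq S]
    [Fintype X] [DecidableEq X]
    (A : Matrix (W × S) (W × S) ℂ) (B : Matrix (S × X) (S × X) ℂ)
    (Pw : Matrix W W ℂ) (Px : Matrix X X ℂ)
    (h : (Matrix.reindex (Equiv.prodAssoc W S X) (Equiv.prodAssoc W S X)
            (A ⊗ₖ (1 : Matrix X X ℂ))) * ((1 : Matrix W W ℂ) ⊗ₖ B)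
        = ((1 : Matrix W W ℂ) ⊗ₖ B) *
          (Matrix.reindex (Equiv.prodAssoc W S X) (Equiv.prodAssoc W S X)
            (A ⊗ₖ (1 : Matrix X X ℂ)))) :
    ptraceLeft (A * (Pw ⊗ₖ (1 : Matrix S S ℂ))) *
        ptraceRight (B * ((1 : Matrix S S ℂ) ⊗ₖ Px))
      = ptraceRight (B * ((1 : Matrix S S ℂ) ⊗ₖ Px)) *
        ptraceLeft (A * (Pw ⊗ₖ (1 : Matrix S S ℂ))) := by
  have key : ∀ (w w' : W) (s s' : S) (x y : X),
      (∑ t, A (w, s) (w', t) * B (t, x) (s', y))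
        = ∑ t, B (s, x) (t, y) * A (w, t) (w', s') := by
    intro w w' s s' x y
    have := congrFun (congrFun h (w, (s, x))) (w', (s', y))
    simpa [Matrix.mul_apply, Fintype.sum_prod_type, Matrix.one_apply,
      Matrix.reindex_apply, Matrix.submatrix_apply, Equiv.prodAssoc, mul_ite, ite_mul,
      mul_zero, zero_mul, Finset.sum_ite_eq, Finset.sum_ite_eq'] using this
  ext s s'
  simp only [Matrix.mul_apply, ptraceLeft, ptraceRight, Matrix.of_apply,
    Fintype.sum_prod_type, Matrix.kroneckerMap_apply, Matrix.one_apply, mul_ite, ite_mul,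
    mul_zero, zero_mul, mul_one, one_mul, Finset.sum_ite_eq, Finset.sum_ite_eq',
    Finset.mem_univ, if_pos, Finset.mul_sum, Finset.sum_mul]
  conv_lhs => enter [2, t, 2, x1]; rw [Finset.sum_comm]
  conv_rhs => enter [2, t, 2, w, 2, w', 2, x3]; rw [Finset.sum_comm]
  simp only [Finset.sum_ite_eq, Finset.sum_ite_eq', Finset.mem_univ, if_pos]
  have key2 : ∀ (x y : X) (w w' : W),
      (∑ t, A (w, s) (w', t) * Pw w' w * (B (t, x) (s', y) * Px y x))
        = ∑ t, B (s, x) (t, y) * Px y x * (A (w, t) (w', s') * Pw w' w) := by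
    intro x y w w'
    calc (∑ t, A (w, s) (w', t) * Pw w' w * (B (t, x) (s', y) * Px y x))
        = (∑ t, A (w, s) (w', t) * B (t, x) (s', y)) * (Pw w' w * Px y x) := by
          rw [Finset.sum_mul]; exact Finset.sum_congr rfl fun _ _ => by ring
      _ = (∑ t, B (s, x) (t, y) * A (w, t) (w', s')) * (Pw w' w * Px y x) := by
          rw [key]
      _ = ∑ t, B (s, x) (t, y) * Px y x * (A (w, t) (w', s') * Pw w' w) := by
          rw [Finset.sum_mul]; exact Finset.sum_congr rfl fun _ _ => by ring
  rw [sum_comm5]; conv_rhs => rw [sum_comm5]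
  simp_rw [key2]
  rw [sum4_rot]

lemma lemB {P X : Type} [Fintype P] [DecidableEq P] [Fintype X] [DecidableEq X]
    (M : Matrix (P × X) (P × X) ℂ) (Q : Matrix P P ℂ) (K : Matrix X X ℂ)
    (h : (Q ⊗ₖ (1 : Matrix X X ℂ)) * M = M * (Q ⊗ₖ (1 : Matrix X X ℂ))) :
    Q * ptraceRight (M * ((1 : Matrix P P ℂ) ⊗ₖ K)) =
      ptraceRight (M * ((1 : Matrix P P ℂ) ⊗ₖ K)) * Q := by
  have key : ∀ (p p' : P) (x y : X),
      (∑ r, Q p r * M (r, x) (p', y)) = ∑ r, M (p, x) (r, y) * Q r p' := by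
    intro p p' x y
    have := congrFun (congrFun h (p, x)) (p', y)
    simpa [Matrix.mul_apply, Fintype.sum_prod_type, Matrix.one_apply, mul_ite, ite_mul,
      Finset.sum_ite_eq, Finset.sum_ite_eq'] using this
  ext p p'
  simp only [Matrix.mul_apply, ptraceRight, Matrix.of_apply, Fintype.sum_prod_type,
    Matrix.kroneckerMap_apply, Matrix.one_apply, mul_ite, ite_mul, mul_zero, zero_mul,
    Finset.mul_sum, Finset.sum_mul]
  conv_lhs => enter [2, w, 2, x1]; rw [Finset.sum_comm]
  conv_rhs => enter [2, w, 2, x1]; rw [Finset.sum_comm]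
  simp only [Finset.sum_ite_eq, Finset.sum_ite_eq', Finset.mem_univ, if_pos]
  rw [Finset.sum_comm]
  conv_lhs => enter [2, x1]; rw [Finset.sum_comm]
  rw [Finset.sum_comm (γ := P)]
  conv_rhs => enter [2, x1]; rw [Finset.sum_comm]
  refine Finset.sum_congr rfl fun x1 _ => Finset.sum_congr rfl fun x3 _ => ?_
  calc (∑ w, Q p w * (M (w, x1) (p', x3) * (1 * K x3 x1)))
      = (∑ w, Q p w * M (w, x1) (p', x3)) * K x3 x1 := by
        rw [Finset.sum_mul]; exact Finset.sum_congr rfl fun _ _ => by ring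
    _ = (∑ r, M (p, x1) (r, x3) * Q r p') * K x3 x1 := by rw [key]
    _ = ∑ r, M (p, x1) (r, x3) * (1 * K x3 x1) * Q r p' := by
        rw [Finset.sum_mul]; exact Finset.sum_congr rfl fun _ _ => by ring


/-- Theorem 5 of the paper.  A Wigner's friend scenario — two chained
complementarity scenarios, witnessed by noncommutation of a prepared state `ρ^{ij}` with the
friend's effect `σ^{a₁x₁}`, and of the friend's outcome projector `1_F ⊗ P_{A₁}^{a₁}` with
Wigner's effect `τ^{a₂x₂}` — requires an interference influence from `{P_Z^i}` to
`{P_{A₁}^{a₁}}`, and an interference influence from `{P_{A₁}^{a₁}}` to `{P_{A₂}^{a₂}}`. -/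
theorem stmt7 {Z G W S X1 F A1 X2 H A2 : Type}
    [Fintype Z] [DecidableEq Z] [Fintype G] [DecidableEq G] [Fintype W] [DecidableEq W]
    [Fintype S] [DecidableEq S] [Fintype X1] [DecidableEq X1] [Fintype F] [DecidableEq F]
    [Fintype A1] [DecidableEq A1] [Fintype X2] [DecidableEq X2] [Fintype H] [DecidableEq H]
    [Fintype A2] [DecidableEq A2]
    {I J XI1 AI1 XI2 AI2 : Type} [Fintype I] [Fintype J] [Fintype XI1] [Fintype AI1]
    [Fintype XI2] [Fintype AI2]
    (U : Matrix (W × S) (Z × G) ℂ) (hU : U * Uᴴ = 1 ∧ Uᴴ * U = 1)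
    (V : Matrix (F × A1) (S × X1) ℂ) (hV : V * Vᴴ = 1 ∧ Vᴴ * V = 1)
    (Wu : Matrix (H × A2) ((F × A1) × X2) ℂ) (hWu : Wu * Wuᴴ = 1 ∧ Wuᴴ * Wu = 1)
    (PZ : I → Matrix Z Z ℂ) (PW : J → Matrix W W ℂ)
    (PX1 : XI1 → Matrix X1 X1 ℂ) (PA1 : AI1 → Matrix A1 A1 ℂ)
    (PX2 : XI2 → Matrix X2 X2 ℂ) (PA2 : AI2 → Matrix A2 A2 ℂ)
    (hPZ : IsProjDecomp PZ) (hPW : IsProjDecomp PW)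
    (hPX1 : IsProjDecomp PX1) (hPA1 : IsProjDecomp PA1)
    (hPX2 : IsProjDecomp PX2) (hPA2 : IsProjDecomp PA2)
    (ρ : I → J → Matrix S S ℂ)
    (hρ : ∀ i j, ρ i j = ptraceLeft
      ((U * (PZ i ⊗ₖ (1 : Matrix G G ℂ)) * Uᴴ) * (PW j ⊗ₖ (1 : Matrix S S ℂ))))
    (σ : AI1 → XI1 → Matrix S S ℂ)
    (hσ : ∀ a1 x1, σ a1 x1 = ptraceRight
      ((Vᴴ * ((1 : Matrix F F ℂ) ⊗ₖ PA1 a1) * V) * ((1 : Matrix S S ℂ) ⊗ₖ PX1 x1)))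
    (τ : AI2 → XI2 → Matrix (F × A1) (F × A1) ℂ)
    (hτ : ∀ a2 x2, τ a2 x2 = ptraceRight
      ((Wuᴴ * ((1 : Matrix H H ℂ) ⊗ₖ PA2 a2) * Wu) *
        ((1 : Matrix (F × A1) (F × A1) ℂ) ⊗ₖ PX2 x2)))
    (hscen1 : ∃ (i : I) (j : J) (a1 : AI1) (x1 : XI1),
      ρ i j * σ a1 x1 ≠ σ a1 x1 * ρ i j)
    (hscen2 : ∃ (a1 : AI1) (x2 : XI2) (a2 : AI2),
      ((1 : Matrix F F ℂ) ⊗ₖ PA1 a1) * τ a2 x2 ≠ τ a2 x2 * ((1 : Matrix F F ℂ) ⊗ₖ PA1 a1)) :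
    (∃ (i : I) (a1 : AI1),
      (Matrix.reindex (Equiv.prodAssoc W S X1) (Equiv.prodAssoc W S X1)
          ((U * (PZ i ⊗ₖ (1 : Matrix G G ℂ)) * Uᴴ) ⊗ₖ (1 : Matrix X1 X1 ℂ))) *
        ((1 : Matrix W W ℂ) ⊗ₖ (Vᴴ * ((1 : Matrix F F ℂ) ⊗ₖ PA1 a1) * V))
      ≠ ((1 : Matrix W W ℂ) ⊗ₖ (Vᴴ * ((1 : Matrix F F ℂ) ⊗ₖ PA1 a1) * V)) *
        (Matrix.reindex (Equiv.prodAssoc W S X1) (Equiv.prodAssoc W S X1)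
          ((U * (PZ i ⊗ₖ (1 : Matrix G G ℂ)) * Uᴴ) ⊗ₖ (1 : Matrix X1 X1 ℂ))))
    ∧
    (∃ (a1 : AI1) (a2 : AI2),
      (((1 : Matrix F F ℂ) ⊗ₖ PA1 a1) ⊗ₖ (1 : Matrix X2 X2 ℂ)) *
          (Wuᴴ * ((1 : Matrix H H ℂ) ⊗ₖ PA2 a2) * Wu)
        ≠ (Wuᴴ * ((1 : Matrix H H ℂ) ⊗ₖ PA2 a2) * Wu) *
          (((1 : Matrix F F ℂ) ⊗ₖ PA1 a1) ⊗ₖ (1 : Matrix X2 X2 ℂ))) := by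
  constructor
  · by_contra hc
    push_neg at hc
    obtain ⟨i, j, a1, x1, hne⟩ := hscen1
    exact hne (by rw [hρ, hσ]; exact lemA _ _ _ _ (hc i a1))
  · by_contra hc
    push_neg at hc
    obtain ⟨a1, x2, a2, hne⟩ := hscen2
    exact hne (by rw [hτ]; exact lemB _ _ _ (hc a1 a2))
end

section
/- Fix d ≥ 1 and let H_A = H_B = H_C = H_D = ℂ^d with standard orthonormal basis {|i⟩}_{i ∈ ℤ/d}. Let V : H_A ⊗ H_B → H_C ⊗ H_D be the unitary V := Σ_{i,j ∈ ℤ/d} ( |i⟩_C ⟨i|_A ) ⊗ ( |j+i⟩_D ⟨j|_B ), with addition modulo d. Then for every linear operator M on H_A: M lies in the complex linear span of { |i⟩⟨i| : i ∈ ℤ/d } if and only if [ V (M ⊗ 1_B) V* , 1_C ⊗ N ] = 0 for every linear operator N on H_D. (By the paper's Definition 4, this says the computational-basis decomposition {|i⟩⟨i|_A} is preferred by D given V.) -/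
open Matrix
open scoped Kronecker

/-!
`V` is the permutation matrix of the controlled shift `(a, b) ↦ (a, b + a)`, so conjugation by
`V` merely reindexes: `V (M ⊗ 1) V*` has entry `M a c · δ(b - a, e - c)` at `((a, b), (c, e))`.
For diagonal `M` this is `M ⊗ 1` again, because the shift fixes the control coordinate, and
`M ⊗ 1` commutes with every `1 ⊗ N`. Conversely, an operator commuting with every `1 ⊗ N`
vanishes at `((a, b), (c, e))` whenever `b ≠ e` (test against `N = |e⟩⟨e|`); at
`((a, a), (c, c))` the entry of `V (M ⊗ 1) V*` is `M a c`, so `M` is diagonal.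
-/

namespace Matrix

variable {ι α β R : Type*}

theorem mem_span_range_single_iff_isDiag [Fintype ι] [DecidableEq ι] [Semiring R]
    {M : Matrix ι ι R} :
    M ∈ Submodule.span R (Set.range fun i => single i i (1 : R)) ↔ M.IsDiag := by
  simp_rw [Submodule.mem_span_range_iff_exists_fun, smul_single, smul_eq_mul, mul_one,
    sum_single_eq_diagonal]
  constructor
  · rintro ⟨v, rfl⟩
    exact isDiag_diagonal v
  · exact fun hM => ⟨_, hM.diagonal_diag⟩

theorem permMatrix_mul_mul_conjTranspose_permMatrix [Fintype ι] [DecidableEq ι] [NonAssocSemiring R]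
    [StarRing R] (σ : Equiv.Perm ι) (B : Matrix ι ι R) :
    σ.permMatrix R * B * (σ.permMatrix R)ᴴ = B.submatrix σ σ := by
  rw [conjTranspose_permMatrix, PEquiv.toMatrix_toPEquiv_mul, PEquiv.mul_toMatrix_toPEquiv]
  rfl

theorem submatrix_diagonal_kronecker_one [DecidableEq α] [DecidableEq β] [MulZeroOneClass R]
    (v : α → R) {σ : Equiv.Perm (α × β)} (hσ : ∀ p, (σ p).1 = p.1) :
    (diagonal v ⊗ₖ (1 : Matrix β β R)).submatrix σ σ = diagonal v ⊗ₖ 1 := by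
  rw [← diagonal_one, diagonal_kronecker_diagonal, submatrix_diagonal_equiv]
  simp only [Function.comp_def, hσ, mul_one]

theorem commute_kronecker_one_one_kronecker [Fintype α] [Fintype β] [DecidableEq α]
    [DecidableEq β] [CommSemiring R] (A : Matrix α α R) (N : Matrix β β R) :
    Commute (A ⊗ₖ 1) (1 ⊗ₖ N) := by
  rw [Commute, SemiconjBy, ← mul_kronecker_mul, ← mul_kronecker_mul, mul_one, one_mul,
    mul_one, one_mul]

theorem apply_eq_zero_of_forall_commute_one_kronecker [Fintype α] [Fintype β] [DecidableEq α]
    [DecidableEq β] [CommSemiring R] {A : Matrix (α × β) (α × β) R}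
    (hA : ∀ N : Matrix β β R, A * (1 ⊗ₖ N) = (1 ⊗ₖ N) * A) (a c : α) {b e : β} (hbe : b ≠ e) :
    A (a, b) (c, e) = 0 := by
  have := congr_fun (congr_fun (hA (single e e 1)) (a, b)) (c, e)
  simpa [mul_apply, Fintype.sum_prod_type, one_apply, single_apply, hbe.symm] using this

end Matrix

namespace Equiv

variable (G : Type*) [AddGroup G]

def controlledShift : Perm (G × G) :=
  prodShear (Equiv.refl G) Equiv.addRight

variable {G}

@[simp]
theorem controlledShift_symm_apply (p : G × G) : (controlledShift G).symm p = (p.1, p.2 - p.1) := by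
  simp [controlledShift, sub_eq_add_neg]

end Equiv

namespace Matrix

variable {G R : Type*} [AddGroup G] [DecidableEq G]

-- Mathlib's `σ.permMatrix` has its ones at `(i, σ i)`, the transpose of the usual convention.
theorem of_eq_permMatrix_inv_controlledShift [Zero R] [One R] :
    (of fun p q : G × G => if p.1 = q.1 ∧ p.2 = q.2 + q.1 then (1 : R) else 0) =
      Equiv.Perm.permMatrix R (Equiv.controlledShift G)⁻¹ := by
  ext p q
  simp only [of_apply, PEquiv.toMatrix_apply, Equiv.toPEquiv_apply, Option.mem_def,
    Option.some.injEq, Equiv.Perm.inv_def, Equiv.controlledShift_symm_apply, Prod.ext_iff,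
    sub_eq_iff_eq_add]
  by_cases h : p.1 = q.1 <;> simp [h]

theorem kronecker_one_submatrix_inv_controlledShift_apply [MulZeroOneClass R]
    (M : Matrix G G R) (a b c e : G) :
    (M ⊗ₖ (1 : Matrix G G R)).submatrix ⇑(Equiv.controlledShift G)⁻¹ ⇑(Equiv.controlledShift G)⁻¹
      (a, b) (c, e) = M a c * (1 : Matrix G G R) (b - a) (e - c) := by
  simp

end Matrix

/-- Lemma 3 of Appendix E of the paper.  For the generalized-CNOT unitary
`V = Σ_{i,j} |i⟩_C⟨i|_A ⊗ |j+i⟩_D⟨j|_B` on `ℂ^d ⊗ ℂ^d` (addition mod `d`), an operator `M`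
on `H_A` lies in the span of the computational-basis projectors `{|i⟩⟨i|}` iff
`V(M ⊗ 1_B)V*` commutes with `1_C ⊗ N` for every operator `N` on `H_D`; i.e. the
computational-basis decomposition on the control is preferred by the target output. -/
theorem stmt11 (d : ℕ) [NeZero d]
    (V : Matrix (ZMod d × ZMod d) (ZMod d × ZMod d) ℂ)
    (hV : V = Matrix.of fun p q => if p.1 = q.1 ∧ p.2 = q.2 + q.1 then (1 : ℂ) else 0) :
    ∀ M : Matrix (ZMod d) (ZMod d) ℂ,
      M ∈ Submodule.span ℂ (Set.range fun i : ZMod d =>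
          (Matrix.single i i 1 : Matrix (ZMod d) (ZMod d) ℂ))
      ↔
      ∀ N : Matrix (ZMod d) (ZMod d) ℂ,
        (V * (M ⊗ₖ (1 : Matrix (ZMod d) (ZMod d) ℂ)) * Vᴴ) *
            ((1 : Matrix (ZMod d) (ZMod d) ℂ) ⊗ₖ N)
          = ((1 : Matrix (ZMod d) (ZMod d) ℂ) ⊗ₖ N) *
            (V * (M ⊗ₖ (1 : Matrix (ZMod d) (ZMod d) ℂ)) * Vᴴ) := by
  intro M
  have hconj : ∀ B, V * B * Vᴴ =
      B.submatrix ⇑(Equiv.controlledShift (ZMod d))⁻¹ ⇑(Equiv.controlledShift (ZMod d))⁻¹ := by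
    rw [hV, of_eq_permMatrix_inv_controlledShift]
    exact permMatrix_mul_mul_conjTranspose_permMatrix _
  rw [mem_span_range_single_iff_isDiag, hconj]
  constructor
  · intro hM N
    rw [← hM.diagonal_diag, submatrix_diagonal_kronecker_one _ fun p => rfl]
    exact commute_kronecker_one_one_kronecker _ _
  · intro h a c hac
    simpa [kronecker_one_submatrix_inv_controlledShift_apply] using
      apply_eq_zero_of_forall_commute_one_kronecker h a c hac
end

section
/- Let H_X, H_F, H_Y, H_A, H_S, H_B be finite-dimensional complex Hilbert spaces and V : H_X ⊗ H_F ⊗ H_Y → H_A ⊗ H_S ⊗ H_B a unitary operator such that [M ⊗ 1_{FY}, V*(1_{AS} ⊗ N)V] = 0 for all operators M on H_X and N on H_B (no influence from X to B), and [1_{XF} ⊗ M', V*(N' ⊗ 1_{SB})V] = 0 for all operators M' on H_Y and N' on H_A (no influence from Y to A). Then for any orthogonal projections P_X on H_X, P_A on H_A, P_Y on H_Y, P_B on H_B, the operators on H_S defined by ρ := Tr_{AB}( (P_A ⊗ 1_{SB}) · V (P_X ⊗ 1_{FY}) V* ) and σ := Tr_{AB}( (1_{AS} ⊗ P_B) ·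 V (1_{XF} ⊗ P_Y) V* ) commute: [ρ, σ] = 0. -/
open Matrix
open scoped Kronecker

/-- conjugation transports commutation through a unitary -/
private lemma conj_comm_aux {n m : Type} [Fintype n] [Fintype m] [DecidableEq n] [DecidableEq m]
    (V : Matrix m n ℂ) (hVl : V * Vᴴ = 1)
    (P : Matrix n n ℂ) (W : Matrix m m ℂ)
    (h : P * (Vᴴ * W * V) = (Vᴴ * W * V) * P) :
    (V * P * Vᴴ) * W = W * (V * P * Vᴴ) := by
  calc (V * P * Vᴴ) * W
      = (V * P * Vᴴ) * W * (V * Vᴴ) := by rw [hVl, Matrix.mul_one]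
    _ = V * (P * (Vᴴ * W * V)) * Vᴴ := by simp only [Matrix.mul_assoc]
    _ = V * ((Vᴴ * W * V) * P) * Vᴴ := by rw [h]
    _ = (V * Vᴴ) * W * (V * P * Vᴴ) := by simp only [Matrix.mul_assoc]
    _ = W * (V * P * Vᴴ) := by rw [hVl, Matrix.one_mul]

private lemma conj_mul_aux {n m : Type} [Fintype n] [Fintype m] [DecidableEq n] [DecidableEq m]
    (V : Matrix m n ℂ) (hVr : Vᴴ * V = 1)
    (P1 P2 : Matrix n n ℂ) :
    (V * P1 * Vᴴ) * (V * P2 * Vᴴ) = V * (P1 * P2) * Vᴴ := by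
  calc (V * P1 * Vᴴ) * (V * P2 * Vᴴ)
      = V * (P1 * ((Vᴴ * V) * P2)) * Vᴴ := by simp only [Matrix.mul_assoc]
    _ = V * (P1 * P2) * Vᴴ := by rw [hVr, Matrix.one_mul]

private lemma kron_mid₁ {A S B : Type} [Fintype A] [DecidableEq A] [Fintype S] [DecidableEq S]
    [Fintype B] [DecidableEq B] (Ma : Matrix A A ℂ) (Mb : Matrix B B ℂ) :
    (Ma ⊗ₖ (1 : Matrix (S × B) (S × B) ℂ)) *
      ((1 : Matrix A A ℂ) ⊗ₖ ((1 : Matrix S S ℂ) ⊗ₖ Mb)) = Ma ⊗ₖ ((1 : Matrix S S ℂ) ⊗ₖ Mb) := by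
  rw [show (1 : Matrix (S × B) (S × B) ℂ) = (1 : Matrix S S ℂ) ⊗ₖ (1 : Matrix B B ℂ) from
      Matrix.one_kronecker_one.symm, ← Matrix.mul_kronecker_mul, ← Matrix.mul_kronecker_mul]
  simp

private lemma kron_mid₂ {A S B : Type} [Fintype A] [DecidableEq A] [Fintype S] [DecidableEq S]
    [Fintype B] [DecidableEq B] (Ma : Matrix A A ℂ) (Mb : Matrix B B ℂ) :
    ((1 : Matrix A A ℂ) ⊗ₖ ((1 : Matrix S S ℂ) ⊗ₖ Mb)) *
      (Ma ⊗ₖ (1 : Matrix (S × B) (S × B) ℂ)) = Ma ⊗ₖ ((1 : Matrix S S ℂ) ⊗ₖ Mb) := by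
  rw [show (1 : Matrix (S × B) (S × B) ℂ) = (1 : Matrix S S ℂ) ⊗ₖ (1 : Matrix B B ℂ) from
      Matrix.one_kronecker_one.symm, ← Matrix.mul_kronecker_mul, ← Matrix.mul_kronecker_mul]
  simp

/-- The partial trace over the two outer tensor factors of an operator on `H_A ⊗ H_S ⊗ H_B`,
giving an operator on the middle factor `H_S`. -/
noncomputable def ptraceOuter {A S B : Type} [Fintype A] [Fintype B]
    (T : Matrix (A × (S × B)) (A × (S × B)) ℂ) : Matrix S S ℂ :=
  Matrix.of fun s s' => ∑ a, ∑ b, T (a, (s, b)) (a, (s', b))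

/-- If a unitary `V : H_X ⊗ H_F ⊗ H_Y → H_A ⊗ H_S ⊗ H_B` has no quantum
influence from `X` to `B` nor from `Y` to `A` (in the Heisenberg-commutation
characterization), then the two unnormalized states prepared on `S` by the two wings,
`ρ = Tr_{AB}((P_A ⊗ 1_{SB})·V(P_X ⊗ 1_{FY})V*)` and
`σ = Tr_{AB}((1_{AS} ⊗ P_B)·V(1_{XF} ⊗ P_Y)V*)`, commute. -/
theorem stmt14 {X F Y A S B : Type}
    [Fintype X] [DecidableEq X] [Fintype F] [DecidableEq F] [Fintype Y] [DecidableEq Y]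
    [Fintype A] [DecidableEq A] [Fintype S] [DecidableEq S] [Fintype B] [DecidableEq B]
    (V : Matrix (A × (S × B)) (X × (F × Y)) ℂ)
    (hV : V * Vᴴ = 1 ∧ Vᴴ * V = 1)
    (hXB : ∀ (M : Matrix X X ℂ) (N : Matrix B B ℂ),
      (M ⊗ₖ (1 : Matrix (F × Y) (F × Y) ℂ)) *
          (Vᴴ * ((1 : Matrix A A ℂ) ⊗ₖ ((1 : Matrix S S ℂ) ⊗ₖ N)) * V)
        = (Vᴴ * ((1 : Matrix A A ℂ) ⊗ₖ ((1 : Matrix S S ℂ) ⊗ₖ N)) * V) *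
          (M ⊗ₖ (1 : Matrix (F × Y) (F × Y) ℂ)))
    (hYA : ∀ (M' : Matrix Y Y ℂ) (N' : Matrix A A ℂ),
      ((1 : Matrix X X ℂ) ⊗ₖ ((1 : Matrix F F ℂ) ⊗ₖ M')) *
          (Vᴴ * (N' ⊗ₖ (1 : Matrix (S × B) (S × B) ℂ)) * V)
        = (Vᴴ * (N' ⊗ₖ (1 : Matrix (S × B) (S × B) ℂ)) * V) *
          ((1 : Matrix X X ℂ) ⊗ₖ ((1 : Matrix F F ℂ) ⊗ₖ M')))
    (PX : Matrix X X ℂ) (hPX : PXᴴ = PX ∧ PX * PX = PX)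
    (PA : Matrix A A ℂ) (hPA : PAᴴ = PA ∧ PA * PA = PA)
    (PY : Matrix Y Y ℂ) (hPY : PYᴴ = PY ∧ PY * PY = PY)
    (PB : Matrix B B ℂ) (hPB : PBᴴ = PB ∧ PB * PB = PB)
    (ρ σ : Matrix S S ℂ)
    (hρ : ρ = ptraceOuter ((PA ⊗ₖ (1 : Matrix (S × B) (S × B) ℂ)) *
      (V * (PX ⊗ₖ (1 : Matrix (F × Y) (F × Y) ℂ)) * Vᴴ)))
    (hσ : σ = ptraceOuter (((1 : Matrix A A ℂ) ⊗ₖ ((1 : Matrix S S ℂ) ⊗ₖ PB)) *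
      (V * ((1 : Matrix X X ℂ) ⊗ₖ ((1 : Matrix F F ℂ) ⊗ₖ PY)) * Vᴴ))) :
    ρ * σ = σ * ρ := by
  obtain ⟨hVl, hVr⟩ := hV
  rcases isEmpty_or_nonempty A with hA | hA
  · have h0 : ρ = 0 := by
      ext s s'
      simp [hρ, ptraceOuter]
    simp [h0]
  rcases isEmpty_or_nonempty B with hB | hB
  · have h0 : ρ = 0 := by
      ext s s'
      simp [hρ, ptraceOuter]
    simp [h0]
  obtain ⟨a₀⟩ := hA
  obtain ⟨b₀⟩ := hB
  set R : Matrix (A × (S × B)) (A × (S × B)) ℂ :=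
    V * (PX ⊗ₖ (1 : Matrix (F × Y) (F × Y) ℂ)) * Vᴴ with hRdef
  set Q : Matrix (A × (S × B)) (A × (S × B)) ℂ :=
    V * ((1 : Matrix X X ℂ) ⊗ₖ ((1 : Matrix F F ℂ) ⊗ₖ PY)) * Vᴴ with hQdef
  -- R commutes with 1 ⊗ 1 ⊗ N
  have hRN : ∀ N : Matrix B B ℂ,
      R * ((1 : Matrix A A ℂ) ⊗ₖ ((1 : Matrix S S ℂ) ⊗ₖ N))
        = ((1 : Matrix A A ℂ) ⊗ₖ ((1 : Matrix S S ℂ) ⊗ₖ N)) * R :=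
    fun N => conj_comm_aux V hVl _ _ (hXB PX N)
  have hQN : ∀ N' : Matrix A A ℂ,
      Q * (N' ⊗ₖ (1 : Matrix (S × B) (S × B) ℂ))
        = (N' ⊗ₖ (1 : Matrix (S × B) (S × B) ℂ)) * Q :=
    fun N' => conj_comm_aux V hVl _ _ (hYA PY N')
  have hRQ : R * Q = Q * R := by
    rw [hRdef, hQdef, conj_mul_aux V hVr, conj_mul_aux V hVr, kron_mid₁, kron_mid₂]
  -- entry lemmas for R
  have hR0 : ∀ (a a' : A) (s s' : S) (b b' : B), b ≠ b' →
      R (a, (s, b)) (a', (s', b')) = 0 := by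
    intro a a' s s' b b' hbb
    have h := congrFun (congrFun
      (hRN (Matrix.of fun d e => if d = b' ∧ e = b' then (1 : ℂ) else 0)) (a, (s, b)))
      (a', (s', b'))
    simp only [Matrix.mul_apply, Fintype.sum_prod_type, Matrix.kroneckerMap_apply,
      Matrix.of_apply, Matrix.one_apply, ite_and, mul_ite, ite_mul, mul_one, mul_zero,
      one_mul, zero_mul, Finset.sum_ite_eq, Finset.sum_ite_eq', Finset.mem_univ, if_true,
      Finset.sum_const_zero, hbb, if_false] at h
    simpa [hbb] using h
  have hRb : ∀ (a a' : A) (s s' : S) (b c : B),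
      R (a, (s, b)) (a', (s', b)) = R (a, (s, c)) (a', (s', c)) := by
    intro a a' s s' b c
    have h := congrFun (congrFun
      (hRN (Matrix.of fun d e => if d = b ∧ e = c then (1 : ℂ) else 0)) (a, (s, b)))
      (a', (s', c))
    simpa only [Matrix.mul_apply, Fintype.sum_prod_type, Matrix.kroneckerMap_apply,
      Matrix.of_apply, Matrix.one_apply, ite_and, mul_ite, ite_mul, mul_one, mul_zero,
      one_mul, zero_mul, Finset.sum_ite_eq, Finset.sum_ite_eq', Finset.mem_univ, if_true,
      Finset.sum_const_zero] using h
  -- entry lemmas for Q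
  have hQ0 : ∀ (a a' : A) (s s' : S) (b b' : B), a ≠ a' →
      Q (a, (s, b)) (a', (s', b')) = 0 := by
    intro a a' s s' b b' haa
    have h := congrFun (congrFun
      (hQN (Matrix.of fun d e => if d = a' ∧ e = a' then (1 : ℂ) else 0)) (a, (s, b)))
      (a', (s', b'))
    simp only [Matrix.mul_apply, Fintype.sum_prod_type, Matrix.kroneckerMap_apply,
      Matrix.of_apply, Matrix.one_apply, ite_and, mul_ite, ite_mul, mul_one, mul_zero,
      one_mul, zero_mul, Finset.sum_ite_eq, Finset.sum_ite_eq', Finset.mem_univ, if_true,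
      Finset.sum_const_zero, haa, if_false, Prod.mk.injEq] at h
    simpa [haa] using h
  have hQa : ∀ (a a' : A) (s s' : S) (b b' : B),
      Q (a, (s, b)) (a, (s', b')) = Q (a', (s, b)) (a', (s', b')) := by
    intro a a' s s' b b'
    have h := congrFun (congrFun
      (hQN (Matrix.of fun d e => if d = a ∧ e = a' then (1 : ℂ) else 0)) (a, (s, b)))
      (a', (s', b'))
    simpa only [Matrix.mul_apply, Fintype.sum_prod_type, Matrix.kroneckerMap_apply,
      Matrix.of_apply, Matrix.one_apply, ite_and, mul_ite, ite_mul, mul_one, mul_zero,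
      one_mul, zero_mul, Finset.sum_ite_eq, Finset.sum_ite_eq', Finset.mem_univ, if_true,
      Finset.sum_const_zero, Prod.mk.injEq] using h
  -- main computation
  set Gm : Matrix (A × (S × B)) (A × (S × B)) ℂ :=
    (PA ⊗ₖ (1 : Matrix (S × B) (S × B) ℂ)) * R with hGm
  set Hm : Matrix (A × (S × B)) (A × (S × B)) ℂ :=
    ((1 : Matrix A A ℂ) ⊗ₖ ((1 : Matrix S S ℂ) ⊗ₖ PB)) * Q with hHm
  have hGH : Gm * Hm = Hm * Gm := by
    have e1 : R * ((1 : Matrix A A ℂ) ⊗ₖ ((1 : Matrix S S ℂ) ⊗ₖ PB))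
        = ((1 : Matrix A A ℂ) ⊗ₖ ((1 : Matrix S S ℂ) ⊗ₖ PB)) * R := hRN PB
    have e2 : Q * (PA ⊗ₖ (1 : Matrix (S × B) (S × B) ℂ))
        = (PA ⊗ₖ (1 : Matrix (S × B) (S × B) ℂ)) * Q := hQN PA
    have e4 : (PA ⊗ₖ (1 : Matrix (S × B) (S × B) ℂ)) *
        ((1 : Matrix A A ℂ) ⊗ₖ ((1 : Matrix S S ℂ) ⊗ₖ PB))
        = ((1 : Matrix A A ℂ) ⊗ₖ ((1 : Matrix S S ℂ) ⊗ₖ PB)) *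
          (PA ⊗ₖ (1 : Matrix (S × B) (S × B) ℂ)) := by
      rw [kron_mid₁, kron_mid₂]
    rw [hGm, hHm]
    calc (PA ⊗ₖ (1 : Matrix (S × B) (S × B) ℂ)) * R *
          (((1 : Matrix A A ℂ) ⊗ₖ ((1 : Matrix S S ℂ) ⊗ₖ PB)) * Q)
        = (PA ⊗ₖ (1 : Matrix (S × B) (S × B) ℂ)) *
            (R * ((1 : Matrix A A ℂ) ⊗ₖ ((1 : Matrix S S ℂ) ⊗ₖ PB)) * Q) := by
          simp only [mul_assoc]
      _ = (PA ⊗ₖ (1 : Matrix (S × B) (S × B) ℂ)) *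
            (((1 : Matrix A A ℂ) ⊗ₖ ((1 : Matrix S S ℂ) ⊗ₖ PB)) * R * Q) := by rw [e1]
      _ = (PA ⊗ₖ (1 : Matrix (S × B) (S × B) ℂ)) *
            (((1 : Matrix A A ℂ) ⊗ₖ ((1 : Matrix S S ℂ) ⊗ₖ PB)) * (R * Q)) := by
          simp only [mul_assoc]
      _ = (PA ⊗ₖ (1 : Matrix (S × B) (S × B) ℂ)) *
            (((1 : Matrix A A ℂ) ⊗ₖ ((1 : Matrix S S ℂ) ⊗ₖ PB)) * (Q * R)) := by rw [hRQ]
      _ = (PA ⊗ₖ (1 : Matrix (S × B) (S × B) ℂ)) *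
            ((1 : Matrix A A ℂ) ⊗ₖ ((1 : Matrix S S ℂ) ⊗ₖ PB)) * Q * R := by
          simp only [mul_assoc]
      _ = ((1 : Matrix A A ℂ) ⊗ₖ ((1 : Matrix S S ℂ) ⊗ₖ PB)) *
            (PA ⊗ₖ (1 : Matrix (S × B) (S × B) ℂ)) * Q * R := by rw [e4]
      _ = ((1 : Matrix A A ℂ) ⊗ₖ ((1 : Matrix S S ℂ) ⊗ₖ PB)) *
            ((Q * (PA ⊗ₖ (1 : Matrix (S × B) (S × B) ℂ))) * R) := by
          rw [e2]; simp only [mul_assoc]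
      _ = ((1 : Matrix A A ℂ) ⊗ₖ ((1 : Matrix S S ℂ) ⊗ₖ PB)) * Q *
            ((PA ⊗ₖ (1 : Matrix (S × B) (S × B) ℂ)) * R) := by simp only [mul_assoc]
  -- entry formulas
  have hGent : ∀ (a c : A) (s t : S) (b b' : B),
      Gm (a, (s, b)) (c, (t, b'))
        = if b = b' then ∑ a₂, PA a a₂ * R (a₂, (s, b₀)) (c, (t, b₀)) else 0 := by
    intro a c s t b b'
    rw [hGm, Matrix.mul_apply, Fintype.sum_prod_type]
    simp only [Matrix.kroneckerMap_apply, Matrix.one_apply, ite_mul, mul_ite, one_mul, zero_mul,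
      mul_one, mul_zero, Finset.sum_ite_eq, Finset.mem_univ, if_true]
    by_cases hbb : b = b'
    · subst hbb
      simp only [if_pos rfl]
      exact Finset.sum_congr rfl fun a₂ _ => by rw [hRb a₂ c s t b b₀]
    · simp only [hbb, if_false]
      exact Finset.sum_eq_zero fun a₂ _ => by rw [hR0 a₂ c s t b b' hbb, mul_zero]
  have hHent : ∀ (a c : A) (s t : S) (b b' : B),
      Hm (a, (s, b)) (c, (t, b'))
        = if a = c then ∑ b₂, PB b b₂ * Q (a₀, (s, b₂)) (a₀, (t, b')) else 0 := by
    intro a c s t b b'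
    rw [hHm, Matrix.mul_apply, Fintype.sum_prod_type]
    simp only [Fintype.sum_prod_type, Matrix.kroneckerMap_apply, Matrix.one_apply, ite_mul,
      mul_ite, one_mul, zero_mul, mul_one, mul_zero, Finset.sum_ite_eq, Finset.sum_ite_eq',
      Finset.mem_univ, if_true, Finset.sum_ite_irrel, Finset.sum_const_zero]
    by_cases haa : a = c
    · subst haa
      simp only [if_pos rfl]
      exact Finset.sum_congr rfl fun b₂ _ => by rw [hQa a a₀ s t b₂ b']
    · simp only [haa, if_false]
      exact Finset.sum_eq_zero fun b₂ _ => by rw [hQ0 a c s t b₂ b' haa, mul_zero]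
  have hρe : ∀ s t : S, ρ s t
      = (Fintype.card B : ℂ) * ∑ a, ∑ a₂, PA a a₂ * R (a₂, (s, b₀)) (a, (t, b₀)) := by
    intro s t
    rw [hρ]
    show (∑ a, ∑ b, Gm (a, (s, b)) (a, (t, b))) = _
    simp only [hGent, eq_self_iff_true, if_true, Finset.sum_const, Finset.card_univ,
      nsmul_eq_mul]
    rw [Finset.mul_sum]
  have hσe : ∀ s t : S, σ s t
      = (Fintype.card A : ℂ) * ∑ b, ∑ b₂, PB b b₂ * Q (a₀, (s, b₂)) (a₀, (t, b)) := by
    intro s t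
    rw [hσ]
    show (∑ a, ∑ b, Hm (a, (s, b)) (a, (t, b))) = _
    simp only [hHent, eq_self_iff_true, if_true, Finset.sum_const, Finset.card_univ,
      nsmul_eq_mul]
  have tr1 : ∀ s s' : S, ptraceOuter (Gm * Hm) s s'
      = ∑ a, ∑ b, ∑ s'', (∑ a₂, PA a a₂ * R (a₂, (s, b₀)) (a, (s'', b₀))) *
          (∑ b₂, PB b b₂ * Q (a₀, (s'', b₂)) (a₀, (s', b))) := by
    intro s s'
    show (∑ a, ∑ b, (Gm * Hm) (a, (s, b)) (a, (s', b))) = _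
    simp only [Matrix.mul_apply, Fintype.sum_prod_type, hGent, hHent, ite_mul, mul_ite,
      zero_mul, mul_zero]
    simp only [Finset.sum_ite_irrel, Finset.sum_const_zero, Finset.sum_ite_eq,
      Finset.sum_ite_eq', Finset.mem_univ, if_true]
  have tr2 : ∀ s s' : S, ptraceOuter (Hm * Gm) s s'
      = ∑ a, ∑ b, ∑ s'', (∑ b₂, PB b b₂ * Q (a₀, (s, b₂)) (a₀, (s'', b))) *
          (∑ a₂, PA a a₂ * R (a₂, (s'', b₀)) (a, (s', b₀))) := by
    intro s s'
    show (∑ a, ∑ b, (Hm * Gm) (a, (s, b)) (a, (s', b))) = _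
    simp only [Matrix.mul_apply, Fintype.sum_prod_type, hGent, hHent, ite_mul, mul_ite,
      zero_mul, mul_zero]
    simp only [Finset.sum_ite_irrel, Finset.sum_const_zero, Finset.sum_ite_eq,
      Finset.sum_ite_eq', Finset.mem_univ, if_true]
  ext s s'
  rw [Matrix.mul_apply, Matrix.mul_apply]
  have key : (∑ a, ∑ b, ∑ s'', (∑ a₂, PA a a₂ * R (a₂, (s, b₀)) (a, (s'', b₀))) *
        (∑ b₂, PB b b₂ * Q (a₀, (s'', b₂)) (a₀, (s', b))))
      = ∑ a, ∑ b, ∑ s'', (∑ b₂, PB b b₂ * Q (a₀, (s, b₂)) (a₀, (s'', b))) *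
        (∑ a₂, PA a a₂ * R (a₂, (s'', b₀)) (a, (s', b₀))) := by
    rw [← tr1 s s', ← tr2 s s', hGH]
  calc (∑ s'', ρ s s'' * σ s'' s')
      = ∑ s'', ((Fintype.card B : ℂ) * ∑ a, ∑ a₂, PA a a₂ * R (a₂, (s, b₀)) (a, (s'', b₀))) *
          ((Fintype.card A : ℂ) * ∑ b, ∑ b₂, PB b b₂ * Q (a₀, (s'', b₂)) (a₀, (s', b))) := by
        simp only [hρe, hσe]
    _ = (Fintype.card A : ℂ) * (Fintype.card B : ℂ) *
          ∑ s'', ∑ a, ∑ b, (∑ a₂, PA a a₂ * R (a₂, (s, b₀)) (a, (s'', b₀))) *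
            (∑ b₂, PB b b₂ * Q (a₀, (s'', b₂)) (a₀, (s', b))) := by
        rw [Finset.mul_sum]
        exact Finset.sum_congr rfl fun s'' _ => by rw [← Finset.sum_mul_sum]; ring
    _ = (Fintype.card A : ℂ) * (Fintype.card B : ℂ) *
          ∑ a, ∑ b, ∑ s'', (∑ a₂, PA a a₂ * R (a₂, (s, b₀)) (a, (s'', b₀))) *
            (∑ b₂, PB b b₂ * Q (a₀, (s'', b₂)) (a₀, (s', b))) := by
        congr 1
        exact Finset.sum_comm.trans (Finset.sum_congr rfl fun a _ => Finset.sum_comm)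
    _ = (Fintype.card A : ℂ) * (Fintype.card B : ℂ) *
          ∑ a, ∑ b, ∑ s'', (∑ b₂, PB b b₂ * Q (a₀, (s, b₂)) (a₀, (s'', b))) *
            (∑ a₂, PA a a₂ * R (a₂, (s'', b₀)) (a, (s', b₀))) := by rw [key]
    _ = (Fintype.card A : ℂ) * (Fintype.card B : ℂ) *
          ∑ b, ∑ a, ∑ s'', (∑ b₂, PB b b₂ * Q (a₀, (s, b₂)) (a₀, (s'', b))) *
            (∑ a₂, PA a a₂ * R (a₂, (s'', b₀)) (a, (s', b₀))) := by
        congr 1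
        exact Finset.sum_comm
    _ = (Fintype.card A : ℂ) * (Fintype.card B : ℂ) *
          ∑ s'', ∑ b, ∑ a, (∑ b₂, PB b b₂ * Q (a₀, (s, b₂)) (a₀, (s'', b))) *
            (∑ a₂, PA a a₂ * R (a₂, (s'', b₀)) (a, (s', b₀))) := by
        congr 1
        exact (Finset.sum_congr rfl fun b _ => Finset.sum_comm).trans Finset.sum_comm
    _ = ∑ s'', ((Fintype.card A : ℂ) * ∑ b, ∑ b₂, PB b b₂ * Q (a₀, (s, b₂)) (a₀, (s'', b))) *
          ((Fintype.card B : ℂ) * ∑ a, ∑ a₂, PA a a₂ * R (a₂, (s'', b₀)) (a, (s', b₀))) := by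
        rw [Finset.mul_sum]
        exact Finset.sum_congr rfl fun s'' _ => by rw [← Finset.sum_mul_sum]; ring
    _ = ∑ s'', σ s s'' * ρ s'' s' := by simp only [hρe, hσe]
end
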